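/- arXiv:math/0505354 — 2 statements merged into one kernel-verified Lean document; each statement's English description precedes it below -/
import Mathlib

section
/- Let z ∈ ℂ be such that −z is not a nonnegative integer (i.e. z ≠ 0, −1, −2, …). The Hurwitz-type series Z(s) = Σ_{ν=0}^{∞} (z + ν)^{−s} converges absolutely for Re s > 1 and admits an analytic continuation g to a connected open set U ⊆ ℂ containing {s : Re s > 1} ∪ {0}; any such continuation satisfies g(0) = 1/2 − z and exp(−g′(0)) = √(2π) / Γ(z), where Γ is the complex Gamma function. (Lerch's formula for complex parameter, in exponentiated form: the zeta-regularized product Π_{ν≥0}(z+ν) equals (Γ(z)/√(2π))^{−1}.) -/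
open Complex Filter Topology Finset Metric

namespace LerchAux

/-! ### Pochhammer products and binomial coefficients -/

noncomputable def poch (j : ℕ) (s : ℂ) : ℂ := ∏ i ∈ Finset.range j, (s + i)

noncomputable def cc (j : ℕ) (s : ℂ) : ℂ := ((-1)^j / (j.factorial : ℂ)) * poch j s

lemma poch_zero (s : ℂ) : poch 0 s = 1 := by simp [poch]

lemma poch_succ (j : ℕ) (s : ℂ) : poch (j+1) s = poch j s * (s + j) := by
  simp [poch, Finset.prod_range_succ]

lemma cc_zero (s : ℂ) : cc 0 s = 1 := by simp [cc, poch]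

lemma cc_one (s : ℂ) : cc 1 s = -s := by simp [cc, poch]

lemma differentiable_poch (j : ℕ) : Differentiable ℂ (poch j) := by
  induction j with
  | zero => simpa [funext (poch_zero)] using differentiable_const (1:ℂ)
  | succ j ih =>
      have : poch (j+1) = fun s => poch j s * (s + j) := funext fun s => poch_succ j s
      rw [this]
      exact ih.mul (differentiable_id.add_const _)

lemma differentiable_cc (j : ℕ) : Differentiable ℂ (cc j) :=
  (differentiable_poch j).const_mul _

lemma norm_poch_le {s : ℂ} {M : ℝ} (hM : ‖s‖ ≤ M) (j : ℕ) :
    ‖poch j s‖ ≤ ∏ i ∈ Finset.range j, (M + i) := by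
  rw [poch]
  refine (Finset.norm_prod_le _ _).trans ?_
  refine Finset.prod_le_prod (fun i _ => norm_nonneg _) (fun i _ => ?_)
  calc ‖s + (i:ℂ)‖ ≤ ‖s‖ + ‖(i:ℂ)‖ := norm_add_le _ _
    _ ≤ M + i := by
        rw [Complex.norm_natCast]
        exact add_le_add hM le_rfl

lemma norm_cc_le {s : ℂ} {M : ℝ} (hM : ‖s‖ ≤ M) (j : ℕ) :
    ‖cc j s‖ ≤ (∏ i ∈ Finset.range j, (M + i)) / (j.factorial : ℝ) := by
  have h1 : ‖cc j s‖ = ‖poch j s‖ / (j.factorial : ℝ) := by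
    rw [cc, norm_mul, norm_div, norm_pow, norm_neg, norm_one, one_pow, Complex.norm_natCast]
    ring
  rw [h1]
  have hf : (0:ℝ) < (j.factorial : ℝ) := by positivity
  gcongr
  exact norm_poch_le hM j

/-- The comparison sequence for the binomial tail. -/
noncomputable def bb (M : ℝ) (j : ℕ) : ℝ := (∏ i ∈ Finset.range j, (M + i)) / (j.factorial : ℝ) * (2:ℝ)⁻¹ ^ j

lemma bb_nonneg {M : ℝ} (hM : 0 ≤ M) (j : ℕ) : 0 ≤ bb M j := by
  have h : 0 ≤ ∏ i ∈ Finset.range j, (M + i) :=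
    Finset.prod_nonneg fun i _ => by positivity
  have h2 : (0:ℝ) ≤ (j.factorial : ℝ) := by positivity
  have h3 : (0:ℝ) ≤ (2:ℝ)⁻¹ ^ j := by positivity
  exact mul_nonneg (div_nonneg h h2) h3

lemma summable_bb {M : ℝ} (hM : 0 ≤ M) : Summable (bb M) := by
  apply summable_of_ratio_norm_eventually_le (r := 3/4) (by norm_num)
  filter_upwards [Filter.eventually_ge_atTop (⌈2*M⌉₊ + 1)] with j hj
  have hMj : 2*M ≤ j := by
    calc 2*M ≤ (⌈2*M⌉₊ : ℝ) := Nat.le_ceil _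
      _ ≤ j := by exact_mod_cast Nat.le_of_succ_le hj
  have h1 : 0 ≤ bb M j := bb_nonneg hM j
  rw [Real.norm_of_nonneg (bb_nonneg hM _), Real.norm_of_nonneg h1]
  have hexp : bb M (j+1) = bb M j * ((M + j) / (j+1) * 2⁻¹) := by
    rw [bb, bb, Finset.prod_range_succ, Nat.factorial_succ, pow_succ]
    have hj1 : ((j:ℝ)+1) ≠ 0 := by positivity
    have hf : ((j.factorial : ℝ)) ≠ 0 := by positivity
    field_simp
    push_cast
    try ring
    try exact Or.inl trivial
  rw [hexp]
  have hb : (M + j) / (j+1) * 2⁻¹ ≤ 3/4 := by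
    rw [div_mul_eq_mul_div, mul_comm, div_le_div_iff₀ (by positivity) (by norm_num)]
    nlinarith [hMj]
  calc bb M j * ((M + j) / (j+1) * 2⁻¹) ≤ bb M j * (3/4) := by
        apply mul_le_mul_of_nonneg_left hb h1
    _ = 3/4 * bb M j := by ring


/-! ### Binomial series -/

lemma one_add_mem_slitPlane {w : ℂ} (hw : ‖w‖ < 1) : 1 + w ∈ Complex.slitPlane := by
  rw [Complex.mem_slitPlane_iff]
  left
  simp only [Complex.add_re, Complex.one_re]
  have h1 : |w.re| ≤ ‖w‖ := by
    exact Complex.abs_re_le_norm w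
  have h2 := (abs_le.mp h1).1
  linarith

lemma one_add_ne_zero {w : ℂ} (hw : ‖w‖ < 1) : 1 + w ≠ 0 :=
  Complex.slitPlane_ne_zero (one_add_mem_slitPlane hw)

lemma diffOn_binom (s : ℂ) : DifferentiableOn ℂ (fun w => (1+w) ^ (-s)) (ball (0:ℂ) 1) := by
  intro w hw
  have hw1 : ‖w‖ < 1 := by simpa [mem_ball, dist_eq_norm] using hw
  exact ((differentiableAt_id.const_add (1:ℂ)).cpow (differentiableAt_const (-s))
    (one_add_mem_slitPlane hw1)).differentiableWithinAt

lemma iteratedDeriv_binom (s : ℂ) (j : ℕ) :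
    ∀ w ∈ ball (0:ℂ) 1,
      iteratedDeriv j (fun w => (1+w) ^ (-s)) w = (-1)^j * poch j s * (1+w) ^ (-s - j) := by
  induction j with
  | zero =>
      intro w _
      simp [iteratedDeriv_zero, poch_zero]
  | succ j ih =>
      intro w hw
      have hw1 : ‖w‖ < 1 := by simpa [mem_ball, dist_eq_norm] using hw
      rw [iteratedDeriv_succ]
      have hev : iteratedDeriv j (fun w => (1+w) ^ (-s)) =ᶠ[𝓝 w]
          (fun w => (-1)^j * poch j s * (1+w) ^ (-s - j)) := by
        filter_upwards [isOpen_ball.mem_nhds hw] with x hx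
        exact ih x hx
      rw [hev.deriv_eq]
      have hd : HasDerivAt (fun w : ℂ => (1+w) ^ (-s - j))
          ((-s - j) * (1+w) ^ (-s - j - 1) * 1) w :=
        HasDerivAt.cpow_const ((hasDerivAt_id w).const_add 1) (one_add_mem_slitPlane hw1)
      have hd2 : HasDerivAt (fun w : ℂ => (-1)^j * poch j s * (1+w) ^ (-s - j))
          ((-1)^j * poch j s * ((-s - j) * (1+w) ^ (-s - j - 1) * 1)) w := hd.const_mul _
      rw [hd2.deriv]
      rw [poch_succ]
      have hexp : -s - (j:ℂ) - 1 = -s - (j+1:ℕ) := by push_cast; ring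
      rw [← hexp]
      ring_nf

lemma hasSum_binom (s : ℂ) {w : ℂ} (hw : ‖w‖ < 1) :
    HasSum (fun j => cc j s * w ^ j) ((1+w) ^ (-s)) := by
  have hwm : w ∈ ball (0:ℂ) 1 := by simpa [mem_ball, dist_eq_norm] using hw
  have H := Complex.hasSum_taylorSeries_on_ball (diffOn_binom s) hwm
  have heq : ∀ j : ℕ, (j.factorial : ℂ)⁻¹ • (w - 0) ^ j •
      iteratedDeriv j (fun w => (1+w) ^ (-s)) 0 = cc j s * w ^ j := by
    intro j
    have h0 : (0:ℂ) ∈ ball (0:ℂ) 1 := by simp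
    rw [iteratedDeriv_binom s j 0 h0]
    have : (1 : ℂ) + 0 = 1 := by ring
    rw [this, Complex.one_cpow]
    simp only [smul_eq_mul, sub_zero, cc]
    ring
  rw [show (fun j => cc j s * w ^ j) = fun j => (j.factorial : ℂ)⁻¹ • (w - 0) ^ j •
      iteratedDeriv j (fun w => (1+w) ^ (-s)) 0 from funext fun j => (heq j).symm]
  exact H

/-! ### Binomial remainder -/

noncomputable def rem (K : ℕ) (s w : ℂ) : ℂ :=
  (1+w) ^ (-s) - ∑ j ∈ Finset.range K, cc j s * w ^ j

lemma hasSum_rem (K : ℕ) (s : ℂ) {w : ℂ} (hw : ‖w‖ < 1) :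
    HasSum (fun j => cc (j+K) s * w ^ (j+K)) (rem K s w) := by
  rw [show rem K s w = (1+w) ^ (-s) - ∑ j ∈ Finset.range K, cc j s * w ^ j from rfl]
  have := (hasSum_nat_add_iff (f := fun j => cc j s * w ^ j) K
    (g := (1+w) ^ (-s) - ∑ j ∈ Finset.range K, cc j s * w ^ j)).mpr
  apply this
  rw [sub_add_cancel]
  exact hasSum_binom s hw

lemma norm_rem_le (K : ℕ) (M : ℝ) (hM : 0 ≤ M) :
    ∃ C : ℝ, 0 ≤ C ∧ ∀ s w : ℂ, ‖s‖ ≤ M → ‖w‖ ≤ 1/2 →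
      ‖rem K s w‖ ≤ C * ‖w‖ ^ K := by
  refine ⟨2^K * ∑' j, bb M j,
    mul_nonneg (by positivity) (tsum_nonneg (bb_nonneg hM)), fun s w hs hw => ?_⟩
  have hw1 : ‖w‖ < 1 := lt_of_le_of_lt hw (by norm_num)
  have hterm : ∀ j : ℕ, ‖cc (j+K) s * w ^ (j+K)‖ ≤ 2^K * bb M (j+K) * ‖w‖ ^ K := by
    intro j
    rw [norm_mul, norm_pow]
    calc ‖cc (j+K) s‖ * ‖w‖ ^ (j+K)
        ≤ ((∏ i ∈ Finset.range (j+K), (M + i)) / ((j+K).factorial : ℝ)) * ((1/2)^j * ‖w‖^K) := by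
          apply mul_le_mul (norm_cc_le hs (j+K))
          · rw [pow_add]
            apply mul_le_mul_of_nonneg_right _ (by positivity)
            calc ‖w‖^j ≤ (1/2)^j := pow_le_pow_left₀ (norm_nonneg w) hw j
              _ = (1/2)^j := rfl
          · positivity
          · have : 0 ≤ ∏ i ∈ Finset.range (j+K), (M + i) :=
              Finset.prod_nonneg fun i _ => by positivity
            positivity
      _ = 2^K * bb M (j+K) * ‖w‖ ^ K := by
          rw [bb, pow_add]
          have h2K : (2:ℝ)^K * (2:ℝ)⁻¹^K = 1 := by rw [← mul_pow]; norm_num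
          linear_combination (-(∏ i ∈ Finset.range (j+K), (M + (i:ℝ))) / ((j+K).factorial : ℝ) * (1/2:ℝ)^j * ‖w‖^K) * h2K
  have hsummand : Summable (fun j => cc (j+K) s * w ^ (j+K)) := (hasSum_rem K s hw1).summable
  have hbs : Summable (fun j => bb M (j+K)) := (summable_nat_add_iff K).mpr (summable_bb hM)
  have hnorm_summ : Summable (fun j => ‖cc (j+K) s * w ^ (j+K)‖) := by
    apply Summable.of_nonneg_of_le (fun j => norm_nonneg _) hterm
    exact (hbs.mul_left _).mul_right _
  rw [← (hasSum_rem K s hw1).tsum_eq]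
  calc ‖∑' j, cc (j+K) s * w ^ (j+K)‖ ≤ ∑' j, ‖cc (j+K) s * w ^ (j+K)‖ :=
        norm_tsum_le_tsum_norm hnorm_summ
    _ ≤ ∑' j, (2^K * bb M (j+K) * ‖w‖ ^ K) :=
        hnorm_summ.tsum_le_tsum hterm ((hbs.mul_left _).mul_right _)
    _ = (2^K * ∑' j, bb M (j+K)) * ‖w‖^K := by
        simp_rw [mul_assoc]
        rw [tsum_mul_left, tsum_mul_right]
        try ring
    _ ≤ (2^K * ∑' j, bb M j) * ‖w‖^K := by
        apply mul_le_mul_of_nonneg_right _ (by positivity)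
        apply mul_le_mul_of_nonneg_left _ (by positivity)
        have h2 := Summable.sum_add_tsum_nat_add (f := bb M) K (summable_bb hM)
        have h3 : 0 ≤ ∑ i ∈ Finset.range K, bb M i :=
          Finset.sum_nonneg fun i _ => bb_nonneg hM i
        rw [show (fun j => bb M (j+K)) = fun j => bb M (j+K) from rfl]
        linarith [h2]


/-! ### cpow splitting and the tail terms -/

lemma ofReal_mul_cpow {r : ℝ} (hr : 0 < r) {x : ℂ} (hx : x ≠ 0) (t : ℂ) :
    ((r:ℂ) * x) ^ t = (r:ℂ) ^ t * x ^ t := by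
  have hr' : (r:ℂ) ≠ 0 := Complex.ofReal_ne_zero.mpr hr.ne'
  rw [Complex.cpow_def_of_ne_zero (mul_ne_zero hr' hx), Complex.cpow_def_of_ne_zero hr',
    Complex.cpow_def_of_ne_zero hx, Complex.log_ofReal_mul hr hx, Complex.ofReal_log hr.le,
    add_mul, Complex.exp_add]

lemma add_cpow_split {z : ℂ} {n : ℕ} (hn : 0 < n) (hzn : z + n ≠ 0) (t : ℂ) :
    (z + n) ^ t = (n:ℂ) ^ t * (1 + z/n) ^ t := by
  have hnne : (n:ℂ) ≠ 0 := Nat.cast_ne_zero.mpr hn.ne'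
  have hmul : z + n = (n:ℂ) * (1 + z/n) := by field_simp; ring
  have h1 : (1 : ℂ) + z/n ≠ 0 := by
    intro h
    apply hzn
    rw [hmul, h, mul_zero]
  have heq : z + n = (((n:ℝ)):ℂ) * (1 + z/n) := by push_cast; exact hmul
  rw [heq, ofReal_mul_cpow (by exact_mod_cast hn) h1]
  norm_num

noncomputable def term (z : ℂ) (K n : ℕ) (s : ℂ) : ℂ :=
  (z+n)^(-s) - ∑ j ∈ Finset.range K, cc j s * z^j * (n:ℂ)^(-s-j)

lemma term_eq (z : ℂ) (K : ℕ) {n : ℕ} (hn : 0 < n) (hzn : z + n ≠ 0) (s : ℂ) :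
    term z K n s = (n:ℂ)^(-s) * rem K s (z/n) := by
  have hnne : (n:ℂ) ≠ 0 := Nat.cast_ne_zero.mpr hn.ne'
  rw [term, rem, add_cpow_split hn hzn, mul_sub, Finset.mul_sum]
  congr 1
  apply Finset.sum_congr rfl
  intro j _
  have hsplit : (n:ℂ)^(-s-(j:ℂ)) = (n:ℂ)^(-s) * ((n:ℂ)^j)⁻¹ := by
    rw [show -s-(j:ℂ) = -s + (-(j:ℂ)) by ring, cpow_add _ _ hnne]
    congr 1
    rw [cpow_neg, cpow_natCast]
  rw [hsplit, div_pow]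
  have hnj : ((n:ℂ))^j ≠ 0 := pow_ne_zero _ hnne
  field_simp

lemma norm_natCast_cpow {n : ℕ} (hn : 0 < n) (t : ℂ) :
    ‖(n:ℂ) ^ t‖ = (n:ℝ) ^ t.re := by
  have hn0 : (0:ℝ) < n := by exact_mod_cast hn
  rw [show ((n:ℂ)) = (((n:ℝ)):ℂ) by push_cast; rfl,
    Complex.norm_cpow_eq_rpow_re_of_pos hn0]

lemma norm_term_le (z : ℂ) (K : ℕ) {M C : ℝ} (hC0 : 0 ≤ C)
    (hC : ∀ s w : ℂ, ‖s‖ ≤ M → ‖w‖ ≤ 1/2 → ‖rem K s w‖ ≤ C * ‖w‖^K)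
    {n : ℕ} (hn : 0 < n) (hzn : z + n ≠ 0) (h2 : 2 * ‖z‖ ≤ n) {s : ℂ} (hs : ‖s‖ ≤ M) :
    ‖term z K n s‖ ≤ C * ‖z‖^K * (n:ℝ) ^ (-s.re - K) := by
  have hn0 : (0:ℝ) < n := by exact_mod_cast hn
  have hw : ‖z/(n:ℂ)‖ ≤ 1/2 := by
    rw [norm_div, Complex.norm_natCast, div_le_div_iff₀ hn0 two_pos]
    linarith
  rw [term_eq z K hn hzn s, norm_mul, norm_natCast_cpow hn]
  have hre : (-s).re = -s.re := by simp
  rw [hre]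
  calc (n:ℝ)^(-s.re) * ‖rem K s (z/n)‖
      ≤ (n:ℝ)^(-s.re) * (C * ‖z/(n:ℂ)‖^K) := by
        apply mul_le_mul_of_nonneg_left (hC s _ hs hw) (Real.rpow_nonneg hn0.le _)
    _ = C * ‖z‖^K * (n:ℝ)^(-s.re - K) := by
        rw [norm_div, Complex.norm_natCast, div_pow, Real.rpow_sub hn0, Real.rpow_natCast]
        field_simp


/-! ### Patched zeta factors -/

noncomputable def HH (w : ℂ) : ℂ := riemannZeta w - (w-1)⁻¹ * (Complex.Gammaℝ w)⁻¹

lemma differentiable_HH : Differentiable ℂ HH := by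
  intro w
  rcases ne_or_eq w 1 with hw | rfl
  · apply DifferentiableAt.sub (differentiableAt_riemannZeta hw)
    apply DifferentiableAt.mul
    · exact (differentiableAt_id.sub_const 1).inv (sub_ne_zero.mpr hw)
    · exact Complex.differentiable_Gammaℝ_inv.differentiableAt
  · have h := HurwitzZeta.differentiableAt_hurwitzZeta_sub_one_div 0
    have heq : (fun s => HurwitzZeta.hurwitzZeta 0 s - 1/(s-1)/Complex.Gammaℝ s) = HH := by
      funext s
      rw [show HurwitzZeta.hurwitzZeta 0 = riemannZeta from HurwitzZeta.hurwitzZeta_zero, HH,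
        div_div, one_div, mul_inv]
    rw [heq] at h
    exact h

noncomputable def EE (j : ℕ) (s : ℂ) : ℂ :=
  ((-1)^j / (j.factorial : ℂ)) * (poch j s * HH (s+j) + poch (j-1) s * (Complex.Gammaℝ (s+j))⁻¹)

lemma differentiable_EE (j : ℕ) : Differentiable ℂ (EE j) := by
  apply Differentiable.const_mul
  apply Differentiable.add
  · exact (differentiable_poch j).mul (differentiable_HH.comp (differentiable_id.add_const _))
  · exact (differentiable_poch _).mul
      (Complex.differentiable_Gammaℝ_inv.comp (differentiable_id.add_const _))

lemma EE_eq {j : ℕ} (hj : 1 ≤ j) {s : ℂ} (hsj : s + j ≠ 1) :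
    EE j s = cc j s * riemannZeta (s + j) := by
  obtain ⟨i, rfl⟩ : ∃ i, j = i + 1 := ⟨j - 1, (Nat.succ_pred_eq_of_pos hj).symm⟩
  have hcast : ((i+1:ℕ):ℂ) = (i:ℂ) + 1 := by push_cast; ring
  have hne : s + (i:ℂ) ≠ 0 := fun h => hsj (by rw [hcast, ← add_assoc, h, zero_add])
  have hz : riemannZeta (s + ((i+1:ℕ):ℂ)) =
      HH (s + ((i+1:ℕ):ℂ)) + (s + (i:ℂ))⁻¹ * (Complex.Gammaℝ (s + ((i+1:ℕ):ℂ)))⁻¹ := by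
    rw [HH]
    rw [show s + ((i+1:ℕ):ℂ) - 1 = s + (i:ℂ) by rw [hcast]; ring]
    ring
  rw [cc, hz, EE]
  rw [show (i+1) - 1 = i from rfl]
  rw [poch_succ]
  linear_combination (-(((-1:ℂ))^(i+1) / ((i+1).factorial : ℂ)) * poch i s *
    (Complex.Gammaℝ (s + ((i+1:ℕ):ℂ)))⁻¹) * mul_inv_cancel₀ hne

/-! ### Tail series `FF` -/

noncomputable def FF (z : ℂ) (N K : ℕ) (s : ℂ) : ℂ := ∑' m : ℕ, term z K (m+N) s

lemma summable_rpow_tail {p : ℝ} (hp : 1 < p) (N : ℕ) :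
    Summable (fun m : ℕ => ((m+N:ℕ):ℝ) ^ (-p)) := by
  have h0 : Summable (fun n : ℕ => ((n:ℝ)^p)⁻¹) := Real.summable_nat_rpow_inv.mpr hp
  have h1 : Summable (fun n : ℕ => ((n:ℝ))^(-p)) := by
    apply h0.congr
    intro n
    rw [Real.rpow_neg (Nat.cast_nonneg n)]
  have h2 := (summable_nat_add_iff N).mpr h1
  apply h2.congr
  intro m
  norm_cast

section Main

variable {z : ℂ} {N : ℕ}

lemma differentiable_term (hz : ∀ n : ℕ, z + n ≠ 0) (K : ℕ) {n : ℕ} (hn : 0 < n) :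
    Differentiable ℂ (fun s => term z K n s) := by
  have hnne : (n:ℂ) ≠ 0 := Nat.cast_ne_zero.mpr hn.ne'
  apply Differentiable.sub
  · exact differentiable_neg.const_cpow (Or.inl (hz n))
  · apply Differentiable.fun_sum
    intro j _
    exact ((differentiable_cc j).mul_const _).mul
      ((differentiable_neg.sub_const _).const_cpow (Or.inl hnne))

lemma FF_aux (hz : ∀ n : ℕ, z + n ≠ 0) (hN : 2*‖z‖ + 2 ≤ N) (K : ℕ) {s₀ : ℂ}
    (hs₀ : 1 - (K:ℝ) < s₀.re) :
    ∃ (U : Set ℂ) (u : ℕ → ℝ), IsOpen U ∧ s₀ ∈ U ∧ Summable u ∧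
      (∀ m : ℕ, ∀ w ∈ U, ‖term z K (m+N) w‖ ≤ u m) := by
  set ε : ℝ := (s₀.re - (1 - (K:ℝ))) / 2 with hε
  have hε0 : 0 < ε := half_pos (sub_pos.mpr hs₀)
  obtain ⟨C, hC0, hC⟩ := norm_rem_le K (‖s₀‖ + ε) (by positivity)
  refine ⟨ball s₀ ε, fun m => C * ‖z‖^K * ((m+N:ℕ):ℝ) ^ (-(s₀.re - ε) - K), isOpen_ball,
    mem_ball_self hε0, ?_, ?_⟩
  · have hp : 1 < (s₀.re - ε) + (K:ℝ) := by
      rw [hε]; linarith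
    have h1 := (summable_rpow_tail hp N).mul_left (C * ‖z‖^K)
    apply h1.congr
    intro m
    rw [show -((s₀.re - ε) + (K:ℝ)) = -(s₀.re - ε) - K by ring]
  · intro m w hw
    have hwball : ‖w - s₀‖ < ε := by
      rw [mem_ball, dist_eq_norm] at hw
      exact hw
    have hws : ‖w‖ ≤ ‖s₀‖ + ε := by
      calc ‖w‖ = ‖s₀ + (w - s₀)‖ := by ring_nf
        _ ≤ ‖s₀‖ + ‖w - s₀‖ := norm_add_le _ _
        _ ≤ ‖s₀‖ + ε := by linarith
    have hwre : s₀.re - ε ≤ w.re := by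
      have h1 : |(w - s₀).re| ≤ ‖w - s₀‖ := by
        exact Complex.abs_re_le_norm _
      have h2 := (abs_le.mp h1).1
      have : (w - s₀).re = w.re - s₀.re := by simp [Complex.sub_re]
      linarith [this ▸ h2]
    have hn : 0 < m + N := by
      have : 2 ≤ (N:ℝ) := by nlinarith [norm_nonneg z]
      have hN1 : 1 ≤ N := by exact_mod_cast (by linarith : (1:ℝ) ≤ N)
      omega
    have h2n : 2 * ‖z‖ ≤ ((m+N:ℕ):ℝ) := by
      have : (N:ℝ) ≤ ((m+N:ℕ):ℝ) := by push_cast; linarith [Nat.cast_nonneg (α := ℝ) m]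
      linarith
    have hb := norm_term_le z K hC0 hC hn (hz (m+N)) h2n hws
    refine hb.trans ?_
    apply mul_le_mul_of_nonneg_left _ (by positivity)
    apply Real.rpow_le_rpow_of_exponent_le
    · have : (1:ℝ) ≤ m + N := by exact_mod_cast hn
      exact_mod_cast this
    · linarith

lemma FF_diffOn (hz : ∀ n : ℕ, z + n ≠ 0) (hN : 2*‖z‖ + 2 ≤ N) (K : ℕ) :
    DifferentiableOn ℂ (FF z N K) {s : ℂ | 1 - (K:ℝ) < s.re} := by
  intro s₀ hs₀
  obtain ⟨U, u, hUopen, hmem, hu, hle⟩ := FF_aux hz hN K hs₀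
  have hn : ∀ m : ℕ, 0 < m + N := by
    intro m
    have : 2 ≤ (N:ℝ) := by nlinarith [norm_nonneg z]
    have hN1 : 1 ≤ N := by exact_mod_cast (by linarith : (1:ℝ) ≤ N)
    omega
  have := differentiableOn_tsum_of_summable_norm hu
    (fun m => (differentiable_term hz K (hn m)).differentiableOn) hUopen hle
  exact (this.differentiableAt (hUopen.mem_nhds hmem)).differentiableWithinAt

lemma FF_hasSum_deriv (hz : ∀ n : ℕ, z + n ≠ 0) (hN : 2*‖z‖ + 2 ≤ N) (K : ℕ) {s₀ : ℂ}
    (hs₀ : 1 - (K:ℝ) < s₀.re) :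
    HasSum (fun m => deriv (fun s => term z K (m+N) s) s₀) (deriv (FF z N K) s₀) := by
  obtain ⟨U, u, hUopen, hmem, hu, hle⟩ := FF_aux hz hN K hs₀
  have hn : ∀ m : ℕ, 0 < m + N := by
    intro m
    have : 2 ≤ (N:ℝ) := by nlinarith [norm_nonneg z]
    have hN1 : 1 ≤ N := by exact_mod_cast (by linarith : (1:ℝ) ≤ N)
    omega
  exact hasSum_deriv_of_summable_norm hu
    (fun m => (differentiable_term hz K (hn m)).differentiableOn) hUopen hle hmem

lemma FF_summable_term (hz : ∀ n : ℕ, z + n ≠ 0) (hN : 2*‖z‖ + 2 ≤ N) (K : ℕ) {s : ℂ}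
    (hs : 1 - (K:ℝ) < s.re) : Summable (fun m => term z K (m+N) s) := by
  obtain ⟨U, u, hUopen, hmem, hu, hle⟩ := FF_aux hz hN K hs
  apply Summable.of_norm
  exact Summable.of_nonneg_of_le (fun m => norm_nonneg _) (fun m => hle m s hmem) hu

end Main


section Main2

variable {z : ℂ} {N : ℕ}

/-! ### Zeta tails -/

lemma summable_cpow_nat {t : ℂ} (ht : t.re < -1) : Summable (fun n : ℕ => (n:ℂ) ^ t) := by
  apply Summable.of_norm
  have hp : 1 < -t.re := by linarith
  have h1 := summable_rpow_tail hp 0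
  have h2 : Summable (fun n : ℕ => ((n:ℝ)) ^ t.re) := by
    apply h1.congr
    intro n
    norm_num
  apply h2.congr
  intro n
  rcases Nat.eq_zero_or_pos n with rfl | hn
  · have ht0 : t ≠ 0 := fun h => by simp [h] at ht; linarith
    simp [Complex.zero_cpow ht0, Real.zero_rpow (by intro h; rw [h] at ht; linarith : t.re ≠ 0)]
  · exact (norm_natCast_cpow hn t).symm

lemma tsum_cpow_eq_zeta {t : ℂ} (ht : t.re < -1) :
    ∑' n : ℕ, (n:ℂ) ^ t = riemannZeta (-t) := by
  have hs : 1 < (-t).re := by simp; linarith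
  rw [zeta_eq_tsum_one_div_nat_cpow hs]
  apply tsum_congr
  intro n
  rw [cpow_neg, one_div, inv_inv]

lemma tsum_cpow_tail {t : ℂ} (ht : t.re < -1) (hN1 : 1 ≤ N) :
    ∑' m : ℕ, ((m+N:ℕ):ℂ) ^ t = riemannZeta (-t) - ∑ n ∈ Finset.Ico 1 N, (n:ℂ) ^ t := by
  have hsum := summable_cpow_nat (ht : t.re < -1)
  have hsplit := Summable.sum_add_tsum_nat_add (f := fun n : ℕ => (n:ℂ)^t) N hsum
  have hrange : ∑ n ∈ Finset.range N, (n:ℂ)^t = ∑ n ∈ Finset.Ico 1 N, (n:ℂ)^t := by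
    rw [Finset.range_eq_Ico, Finset.sum_eq_sum_Ico_succ_bot hN1]
    have ht0 : t ≠ 0 := fun h => by simp [h] at ht; linarith
    norm_num [Complex.zero_cpow ht0]
  rw [← tsum_cpow_eq_zeta ht, ← hsplit, hrange]
  ring

/-! ### Summability of the main series -/

lemma summable_norm_main (hz : ∀ n : ℕ, z + n ≠ 0) {s : ℂ} (hs : 1 < s.re) :
    Summable (fun ν : ℕ => ‖(z + (ν:ℂ)) ^ (-s)‖) := by
  set N₂ : ℕ := ⌈2*‖z‖⌉₊ + 2 with hN₂
  have hN₂z : 2*‖z‖ + 2 ≤ (N₂:ℝ) := by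
    rw [hN₂]
    push_cast
    linarith [Nat.le_ceil (2*‖z‖)]
  rw [← summable_nat_add_iff N₂]
  set Cb : ℝ := Real.exp (Real.pi * |s.im|) * (2:ℝ)^(s.re) with hCb
  apply Summable.of_nonneg_of_le (fun m => norm_nonneg _)
    (f := fun m => Cb * ((m+N₂:ℕ):ℝ)^(-s.re))
  · intro m
    set n : ℕ := m + N₂ with hn
    have hnR : 2*‖z‖ + 2 ≤ (n:ℝ) := by
      rw [hn]; push_cast; linarith [Nat.le_ceil (2*‖z‖), Nat.cast_nonneg (α := ℝ) m]
    have hn0 : (0:ℝ) < n := by linarith [norm_nonneg z]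
    have hzn : z + (n:ℂ) ≠ 0 := hz n
    have habs : ‖(z+(n:ℂ))^(-s)‖ =
        ‖z+(n:ℂ)‖ ^ ((-s).re) / Real.exp ((z+(n:ℂ)).arg * (-s).im) := by
      exact norm_cpow_of_ne_zero hzn (-s)
    have hlow : (n:ℝ)/2 ≤ ‖z+(n:ℂ)‖ := by
      have h1 : (n:ℝ) = ‖(n:ℂ)‖ := by
        rw [Complex.norm_natCast]
      have h2 : ‖(n:ℂ)‖ ≤ ‖z+(n:ℂ)‖ + ‖z‖ := by
        calc ‖(n:ℂ)‖ = ‖(z+(n:ℂ)) - z‖ := by ring_nf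
          _ ≤ ‖z+(n:ℂ)‖ + ‖z‖ := by
              apply (norm_sub_le _ _).trans
              simp [map_neg_eq_map]
      have h3 : ‖z‖ = ‖z‖ := rfl
      have : ‖z‖ ≤ (n:ℝ)/2 := by linarith
      linarith [h1 ▸ h2]
    have habs_pos : (0:ℝ) < ‖z+(n:ℂ)‖ := lt_of_lt_of_le (by linarith) hlow
    rw [habs]
    have step1 : ‖z+(n:ℂ)‖ ^ ((-s).re) ≤ ((n:ℝ)/2) ^ (-s.re) := by
      rw [Complex.neg_re, Real.rpow_neg habs_pos.le, Real.rpow_neg (by linarith)]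
      apply inv_anti₀ (Real.rpow_pos_of_pos (by linarith) _)
      exact Real.rpow_le_rpow (by linarith) hlow (by linarith)
    have step2 : 1 / Real.exp ((z+(n:ℂ)).arg * (-s).im) ≤ Real.exp (Real.pi * |s.im|) := by
      rw [one_div, ← Real.exp_neg]
      apply Real.exp_le_exp.mpr
      have harg := Complex.abs_arg_le_pi (z+(n:ℂ))
      have : |(z+(n:ℂ)).arg * (-s).im| ≤ Real.pi * |s.im| := by
        rw [abs_mul]
        apply mul_le_mul harg (le_of_eq (by simp [Complex.neg_im, abs_neg])) (abs_nonneg _)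
          Real.pi_pos.le
      linarith [neg_abs_le ((z+(n:ℂ)).arg * (-s).im), abs_le.mp this]
    have hsplit : ((n:ℝ)/2) ^ (-s.re) = (2:ℝ)^(s.re) * (n:ℝ)^(-s.re) := by
      rw [Real.div_rpow (by linarith) (by norm_num), Real.rpow_neg (by linarith : (0:ℝ) ≤ (n:ℝ)),
        Real.rpow_neg (by norm_num : (0:ℝ) ≤ (2:ℝ))]
      field_simp
    calc ‖z+(n:ℂ)‖ ^ ((-s).re) / Real.exp ((z+(n:ℂ)).arg * (-s).im)
        ≤ ((n:ℝ)/2) ^ (-s.re) * Real.exp (Real.pi * |s.im|) := by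
          rw [div_eq_mul_inv, ← one_div]
          apply mul_le_mul step1 step2 (by positivity)
            (Real.rpow_nonneg (by linarith) _)
      _ = Cb * ((n:ℕ):ℝ)^(-s.re) := by
          rw [hsplit, hCb]
          push_cast
          ring
  · exact (summable_rpow_tail hs N₂).mul_left Cb

lemma summable_main (hz : ∀ n : ℕ, z + n ≠ 0) {s : ℂ} (hs : 1 < s.re) :
    Summable (fun ν : ℕ => (z + (ν:ℂ)) ^ (-s)) :=
  (summable_norm_main hz hs).of_norm

end Main2


noncomputable def GK (z : ℂ) (N K : ℕ) (s : ℂ) : ℂ :=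
  (∑ n ∈ Finset.range N, (z+(n:ℂ))^(-s))
  + (riemannZeta s - ∑ n ∈ Finset.Ico 1 N, (n:ℂ)^(-s))
  + (∑ j ∈ Finset.Ico 1 K, (z^j * EE j s - cc j s * z^j * ∑ n ∈ Finset.Ico 1 N, (n:ℂ)^(-s-(j:ℂ))))
  + FF z N K s

section Main3

variable {z : ℂ} {N : ℕ}

lemma N_one_le (hN : 2*‖z‖ + 2 ≤ N) : 1 ≤ N := by
  have : 2 ≤ (N:ℝ) := by nlinarith [norm_nonneg z]
  exact_mod_cast (by linarith : (1:ℝ) ≤ (N:ℝ))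

lemma GK_eq_tsum (hz : ∀ n : ℕ, z + n ≠ 0) (hN : 2*‖z‖ + 2 ≤ N) {K : ℕ} (hK : 1 ≤ K)
    {s : ℂ} (hs : 1 < s.re) :
    GK z N K s = ∑' ν : ℕ, (z + (ν:ℂ))^(-s) := by
  have hN1 : 1 ≤ N := N_one_le hN
  have hmain := summable_main hz hs
  have hsplit := Summable.sum_add_tsum_nat_add (f := fun ν : ℕ => (z + (ν:ℂ))^(-s)) N hmain
  have htre : ∀ j : ℕ, (-s-(j:ℂ)).re < -1 := by
    intro j
    have h1 : (-s-(j:ℂ)).re = -s.re - j := by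
      simp [Complex.sub_re, Complex.neg_re]
    rw [h1]
    have : (0:ℝ) ≤ (j:ℝ) := Nat.cast_nonneg j
    linarith
  have hcpowt : ∀ j : ℕ, Summable (fun m : ℕ => ((m+N:ℕ):ℂ)^(-s-(j:ℂ))) := by
    intro j
    exact (summable_nat_add_iff N).mpr (summable_cpow_nat (htre j))
  have hterm := FF_summable_term hz hN K
    (by
      have : (0:ℝ) ≤ (K:ℝ) := Nat.cast_nonneg K
      have h1 : (1:ℝ) ≤ (K:ℝ) := by exact_mod_cast hK
      linarith : 1 - (K:ℝ) < s.re)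
  have hpoint : ∀ m : ℕ, (z + ((m+N:ℕ):ℂ))^(-s)
      = term z K (m+N) s + ∑ j ∈ Finset.range K, cc j s * z^j * ((m+N:ℕ):ℂ)^(-s-(j:ℂ)) := by
    intro m
    rw [term]
    ring
  have htail : ∑' m : ℕ, (z + ((m+N:ℕ):ℂ))^(-s)
      = FF z N K s + ∑ j ∈ Finset.range K, (cc j s * z^j *
          (riemannZeta (s+(j:ℂ)) - ∑ n ∈ Finset.Ico 1 N, (n:ℂ)^(-s-(j:ℂ)))) := by
    rw [tsum_congr hpoint,
      Summable.tsum_add hterm (summable_sum (fun j _ => ((hcpowt j).mul_left _)))]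
    rw [FF]
    congr 1
    rw [Summable.tsum_finsetSum (fun j _ => (hcpowt j).mul_left _)]
    apply Finset.sum_congr rfl
    intro j _
    rw [tsum_mul_left]
    congr 1
    rw [tsum_cpow_tail (htre j) hN1, show -(-s-(j:ℂ)) = s + j by ring]
  rw [← hsplit, htail, GK]
  rw [Finset.range_eq_Ico K, Finset.sum_eq_sum_Ico_succ_bot (lt_of_lt_of_le zero_lt_one hK)]
  have h0 : cc 0 s * z^0 * (riemannZeta (s+((0:ℕ):ℂ))
        - ∑ n ∈ Finset.Ico 1 N, (n:ℂ)^(-s-((0:ℕ):ℂ)))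
      = riemannZeta s - ∑ n ∈ Finset.Ico 1 N, (n:ℂ)^(-s) := by
    rw [cc_zero]
    norm_num
  have hjeq : ∀ j ∈ Finset.Ico (0+1) K,
      cc j s * z^j * (riemannZeta (s+(j:ℂ)) - ∑ n ∈ Finset.Ico 1 N, (n:ℂ)^(-s-(j:ℂ)))
      = z^j * EE j s - cc j s * z^j * ∑ n ∈ Finset.Ico 1 N, (n:ℂ)^(-s-(j:ℂ)) := by
    intro j hj
    have hj1 : 1 ≤ j := (Finset.mem_Ico.mp hj).1
    have hsj : s + (j:ℂ) ≠ 1 := by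
      intro h
      have hre := congrArg Complex.re h
      simp only [Complex.add_re, Complex.natCast_re, Complex.one_re] at hre
      have hj1' : (1:ℝ) ≤ (j:ℝ) := by exact_mod_cast hj1
      linarith
    rw [EE_eq hj1 hsj]
    ring
  rw [h0, Finset.sum_congr rfl hjeq]
  ring

end Main3


/-! ### Connectivity lemmas -/

lemma isPreconnected_punctured_ball (p : ℂ) {ε : ℝ} (hε : 0 < ε) :
    IsPreconnected (ball p ε \ {p}) := by
  have hrank : 1 < Module.rank ℝ ℂ := by rw [Complex.rank_real_complex]; norm_num
  have hsph : IsPreconnected (sphere (0:ℂ) 1) := isPreconnected_sphere hrank 0 1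
  have hprod : IsPreconnected ((Set.Ioo (0:ℝ) ε) ×ˢ sphere (0:ℂ) 1) :=
    isPreconnected_Ioo.prod hsph
  have hcont : Continuous (fun q : ℝ × ℂ => p + q.1 • q.2) := by continuity
  have himg : (fun q : ℝ × ℂ => p + q.1 • q.2) '' ((Set.Ioo (0:ℝ) ε) ×ˢ sphere (0:ℂ) 1)
      = ball p ε \ {p} := by
    ext x
    constructor
    · rintro ⟨⟨t, y⟩, ⟨ht, hy⟩, rfl⟩
      simp only [Set.mem_Ioo] at ht
      have hy1 : ‖y‖ = 1 := by simpa using hy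
      have hnorm : ‖(t:ℝ) • y‖ = t := by
        rw [norm_smul, hy1, mul_one, Real.norm_eq_abs, abs_of_pos ht.1]
      constructor
      · rw [mem_ball, dist_eq_norm, add_sub_cancel_left, hnorm]
        exact ht.2
      · simp only [Set.mem_singleton_iff]
        intro h
        have h0 : (t:ℝ) • y = 0 := by
          have := congrArg (fun w => w - p) h
          simpa using this
        rw [h0, norm_zero] at hnorm
        exact ht.1.ne hnorm
    · rintro ⟨hx, hxp⟩
      have hxp' : x ≠ p := by simpa using hxp
      have hpos : 0 < ‖x - p‖ := by
        rw [norm_pos_iff]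
        exact sub_ne_zero.mpr hxp'
      refine ⟨(‖x - p‖, ‖x - p‖⁻¹ • (x - p)), ⟨⟨hpos, ?_⟩, ?_⟩, ?_⟩
      · rw [mem_ball, dist_eq_norm] at hx
        exact hx
      · simp only [mem_sphere_iff_norm, sub_zero]
        rw [norm_smul, norm_inv, Real.norm_eq_abs, abs_of_pos hpos,
          inv_mul_cancel₀ hpos.ne']
      · simp only
        rw [smul_smul, mul_inv_cancel₀ hpos.ne', one_smul]
        ring
  rw [← himg]
  exact hprod.image _ hcont.continuousOn

lemma isPreconnected_open_diff_singleton {U : Set ℂ} (hU : IsOpen U) (hconn : IsPreconnected U)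
    (p : ℂ) : IsPreconnected (U \ {p}) := by
  rcases em (p ∈ U) with hp | hp
  swap
  · rwa [Set.diff_singleton_eq_self hp]
  obtain ⟨ε, hε0, hball⟩ := Metric.isOpen_iff.mp hU p hp
  have hmeet : ∀ v : Set ℂ, IsOpen v → p ∈ v → ((ball p ε \ {p}) ∩ v).Nonempty := by
    intro v hv hpv
    obtain ⟨δ, hδ0, hδ⟩ := Metric.isOpen_iff.mp hv p hpv
    have hc0 : 0 < min δ ε / 2 := by positivity
    refine ⟨p + ((min δ ε / 2 : ℝ) : ℂ), ⟨⟨?_, ?_⟩, ?_⟩⟩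
    · rw [mem_ball, dist_eq_norm]
      simp only [add_sub_cancel_left]
      rw [Complex.norm_real, Real.norm_eq_abs, abs_of_pos hc0]
      have := min_le_right δ ε
      linarith
    · simp only [Set.mem_singleton_iff]
      intro h
      have : ((min δ ε / 2 : ℝ) : ℂ) = 0 := by
        have := congrArg (fun w => w - p) h
        simpa using this
      rw [Complex.ofReal_eq_zero] at this
      exact hc0.ne' this
    · apply hδ
      rw [mem_ball, dist_eq_norm]
      simp only [add_sub_cancel_left]
      rw [Complex.norm_real, Real.norm_eq_abs, abs_of_pos hc0]
      have := min_le_left δ ε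
      linarith
  intro u v hu hv hsub hsu hsv
  set P := ball p ε \ {p} with hP
  have hPsub : P ⊆ U \ {p} := fun x hx => ⟨hball hx.1, hx.2⟩
  have hPuv : P ⊆ u ∪ v := hPsub.trans hsub
  have hPpre := isPreconnected_punctured_ball p hε0
  by_cases hPu : (P ∩ u).Nonempty
  · by_cases hPv : (P ∩ v).Nonempty
    · obtain ⟨x, hx⟩ := hPpre u v hu hv hPuv hPu hPv
      exact ⟨x, hPsub hx.1, hx.2⟩
    · have hPu' : P ⊆ u := fun x hx =>
        (hPuv hx).resolve_right (fun hxv => hPv ⟨x, hx, hxv⟩)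
      have hcover2 : U ⊆ (u ∪ ball p ε) ∪ v := by
        intro x hxU
        rcases eq_or_ne x p with rfl | hxp
        · exact Or.inl (Or.inr (mem_ball_self hε0))
        · rcases hsub ⟨hxU, by simpa using hxp⟩ with h | h
          exacts [Or.inl (Or.inl h), Or.inr h]
      have hne1 : (U ∩ (u ∪ ball p ε)).Nonempty := by
        obtain ⟨x, hx, hxu⟩ := hsu
        exact ⟨x, hx.1, Or.inl hxu⟩
      have hne2 : (U ∩ v).Nonempty := by
        obtain ⟨x, hx, hxv⟩ := hsv
        exact ⟨x, hx.1, hxv⟩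
      obtain ⟨x, hxU, hx1, hxv⟩ := hconn (u ∪ ball p ε) v (hu.union isOpen_ball) hv
        hcover2 hne1 hne2
      rcases eq_or_ne x p with rfl | hxp
      · obtain ⟨y, hy1, hy2⟩ := hmeet v hv hxv
        exact absurd ⟨y, hy1, hy2⟩ hPv
      · rcases hx1 with hxu | hxball
        · exact ⟨x, ⟨hxU, by simpa using hxp⟩, hxu, hxv⟩
        · have hxP : x ∈ P := ⟨hxball, by simpa using hxp⟩
          exact ⟨x, ⟨hxU, by simpa using hxp⟩, hPu' hxP, hxv⟩
  · have hPv' : P ⊆ v := by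
      intro x hx
      rcases hPuv hx with h | h
      · exact absurd ⟨x, hx, h⟩ hPu
      · exact h
    have hcover2 : U ⊆ u ∪ (v ∪ ball p ε) := by
      intro x hxU
      rcases eq_or_ne x p with rfl | hxp
      · exact Or.inr (Or.inr (mem_ball_self hε0))
      · rcases hsub ⟨hxU, by simpa using hxp⟩ with h | h
        exacts [Or.inl h, Or.inr (Or.inl h)]
    have hne1 : (U ∩ u).Nonempty := by
      obtain ⟨x, hx, hxu⟩ := hsu
      exact ⟨x, hx.1, hxu⟩
    have hne2 : (U ∩ (v ∪ ball p ε)).Nonempty := by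
      obtain ⟨x, hx, hxv⟩ := hsv
      exact ⟨x, hx.1, Or.inl hxv⟩
    obtain ⟨x, hxU, hxu, hx2⟩ := hconn u (v ∪ ball p ε) hu (hv.union isOpen_ball)
      hcover2 hne1 hne2
    rcases eq_or_ne x p with rfl | hxp
    · obtain ⟨y, hy1, hy2⟩ := hmeet u hu hxu
      exact absurd ⟨y, hy1, hy2⟩ hPu
    · rcases hx2 with hxv | hxball
      · exact ⟨x, ⟨hxU, by simpa using hxp⟩, hxu, hxv⟩
      · have hxP : x ∈ P := ⟨hxball, by simpa using hxp⟩
        exact ⟨x, ⟨hxU, by simpa using hxp⟩, hxu, hPv' hxP⟩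

/-! ### Differentiability of `GK` off `s = 1` -/

def SKset (K : ℕ) : Set ℂ := {s : ℂ | 1 - (K:ℝ) < s.re} \ {1}

lemma isOpen_halfplane (c : ℝ) : IsOpen {s : ℂ | c < s.re} :=
  isOpen_lt continuous_const Complex.continuous_re

lemma isOpen_SKset (K : ℕ) : IsOpen (SKset K) :=
  (isOpen_halfplane _).sdiff isClosed_singleton

lemma isPreconnected_SKset (K : ℕ) : IsPreconnected (SKset K) :=
  isPreconnected_open_diff_singleton (isOpen_halfplane _)
    (convex_halfSpace_re_gt _).isPreconnected 1

section Main4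

variable {z : ℂ} {N : ℕ}

lemma GK_diffOn (hz : ∀ n : ℕ, z + n ≠ 0) (hN : 2*‖z‖ + 2 ≤ N) (K : ℕ) :
    DifferentiableOn ℂ (GK z N K) (SKset K) := by
  intro s hsmem
  obtain ⟨hs1, hsne⟩ := hsmem
  have hne1 : s ≠ 1 := by simpa using hsne
  apply DifferentiableAt.differentiableWithinAt
  have hA : DifferentiableAt ℂ (fun s => ∑ n ∈ Finset.range N, (z+(n:ℂ))^(-s)) s := by
    apply DifferentiableAt.fun_sum
    intro n _
    exact (differentiable_neg.const_cpow (Or.inl (hz n))).differentiableAt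
  have hB : ∀ t : ℂ, DifferentiableAt ℂ (fun s => ∑ n ∈ Finset.Ico 1 N, (n:ℂ)^(-s-t)) s := by
    intro t
    apply DifferentiableAt.fun_sum
    intro n hn
    have hnne : (n:ℂ) ≠ 0 := Nat.cast_ne_zero.mpr (by
      have := (Finset.mem_Ico.mp hn).1; omega)
    exact ((differentiable_neg.sub_const t).const_cpow (Or.inl hnne)).differentiableAt
  have hB0 : DifferentiableAt ℂ (fun s => ∑ n ∈ Finset.Ico 1 N, (n:ℂ)^(-s)) s := by
    apply DifferentiableAt.fun_sum
    intro n hn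
    have hnne : (n:ℂ) ≠ 0 := Nat.cast_ne_zero.mpr (by
      have := (Finset.mem_Ico.mp hn).1; omega)
    exact (differentiable_neg.const_cpow (Or.inl hnne)).differentiableAt
  have hZ : DifferentiableAt ℂ riemannZeta s := differentiableAt_riemannZeta hne1
  have hmid : DifferentiableAt ℂ (fun s => ∑ j ∈ Finset.Ico 1 K,
      (z^j * EE j s - cc j s * z^j * ∑ n ∈ Finset.Ico 1 N, (n:ℂ)^(-s-(j:ℂ)))) s := by
    apply DifferentiableAt.fun_sum
    intro j _
    apply DifferentiableAt.sub
    · exact ((differentiable_EE j) s).const_mul _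
    · exact (((differentiable_cc j) s).mul_const _).mul (hB j)
  have hFF : DifferentiableAt ℂ (FF z N K) s :=
    (FF_diffOn hz hN K).differentiableAt ((isOpen_halfplane _).mem_nhds hs1)
  exact ((hA.add (hZ.sub hB0)).add hmid).add hFF

end Main4


/-! ### Gluing the continuations -/

noncomputable def KKof (s : ℂ) : ℕ := max 2 (⌈1 - s.re⌉₊ + 1)

lemma two_le_KKof (s : ℂ) : 2 ≤ KKof s := le_max_left _ _

lemma mem_SKset_KKof {s : ℂ} (hs : s ≠ 1) : s ∈ SKset (KKof s) := by
  constructor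
  · show 1 - ((KKof s : ℕ):ℝ) < s.re
    have h1 : (1:ℝ) - s.re ≤ (⌈1 - s.re⌉₊ : ℝ) := Nat.le_ceil _
    have h2 : ((⌈1 - s.re⌉₊ + 1 : ℕ):ℝ) ≤ ((KKof s : ℕ):ℝ) := by
      exact_mod_cast le_max_right 2 (⌈1 - s.re⌉₊ + 1)
    push_cast at h2
    linarith
  · simpa using hs

noncomputable def Ghat (z : ℂ) (N : ℕ) (s : ℂ) : ℂ := GK z N (KKof s) s

section Glue

variable {z : ℂ} {N : ℕ}

lemma SKset_mono {K K' : ℕ} (h : K ≤ K') : SKset K ⊆ SKset K' := by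
  intro s hs
  refine ⟨?_, hs.2⟩
  have h1 : (1:ℝ) - K' ≤ 1 - K := by
    have : (K:ℝ) ≤ K' := by exact_mod_cast h
    linarith
  exact lt_of_le_of_lt h1 hs.1

lemma two_mem_SKset {K : ℕ} (hK : 1 ≤ K) : (2:ℂ) ∈ SKset K := by
  constructor
  · show 1 - (K:ℝ) < (2:ℂ).re
    have : (1:ℝ) ≤ K := by exact_mod_cast hK
    simp only [Complex.re_ofNat]
    linarith
  · simp

lemma GK_agree (hz : ∀ n : ℕ, z + n ≠ 0) (hN : 2*‖z‖ + 2 ≤ N) {K K' : ℕ} (hK : 1 ≤ K)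
    (hKK' : K ≤ K') : Set.EqOn (GK z N K) (GK z N K') (SKset K) := by
  have hdiff1 := GK_diffOn hz hN K
  have hdiff2 := (GK_diffOn hz hN K').mono (SKset_mono hKK')
  apply AnalyticOnNhd.eqOn_of_preconnected_of_eventuallyEq
    (hdiff1.analyticOnNhd (isOpen_SKset K)) (hdiff2.analyticOnNhd (isOpen_SKset K))
    (isPreconnected_SKset K) (two_mem_SKset hK)
  have h2 : (2:ℂ) ∈ {s : ℂ | 1 < s.re} := by
    simp only [Set.mem_setOf_eq, Complex.re_ofNat]
    norm_num
  filter_upwards [(isOpen_halfplane 1).mem_nhds h2] with x hx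
  rw [GK_eq_tsum hz hN hK hx, GK_eq_tsum hz hN (le_trans hK hKK') hx]

lemma Ghat_eqOn (hz : ∀ n : ℕ, z + n ≠ 0) (hN : 2*‖z‖ + 2 ≤ N) {K : ℕ} (hK : 2 ≤ K) :
    Set.EqOn (Ghat z N) (GK z N K) (SKset K) := by
  intro s hs
  have hs1 : s ≠ 1 := by simpa using hs.2
  have h1 : s ∈ SKset (KKof s) := mem_SKset_KKof hs1
  have hmax1 : GK z N (KKof s) s = GK z N (max K (KKof s)) s :=
    GK_agree hz hN (le_trans one_le_two (two_le_KKof s)) (le_max_right K _) h1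
  have hmax2 : GK z N K s = GK z N (max K (KKof s)) s :=
    GK_agree hz hN (le_trans one_le_two hK) (le_max_left K _) hs
  exact hmax1.trans hmax2.symm

lemma Ghat_diffOn (hz : ∀ n : ℕ, z + n ≠ 0) (hN : 2*‖z‖ + 2 ≤ N) :
    DifferentiableOn ℂ (Ghat z N) {(1:ℂ)}ᶜ := by
  intro s hs
  have hs1 : s ≠ 1 := hs
  have hsK : s ∈ SKset (KKof s) := mem_SKset_KKof hs1
  have hopen := isOpen_SKset (KKof s)
  have hdiff : DifferentiableAt ℂ (GK z N (KKof s)) s :=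
    (GK_diffOn hz hN (KKof s)).differentiableAt (hopen.mem_nhds hsK)
  have hev : Ghat z N =ᶠ[𝓝 s] GK z N (KKof s) := by
    filter_upwards [hopen.mem_nhds hsK] with x hx
    exact Ghat_eqOn hz hN (two_le_KKof s) hx
  exact (hev.differentiableAt_iff.mpr hdiff).differentiableWithinAt

lemma mem_SKset_two_of_re {s : ℂ} (hs : 1 < s.re) : s ∈ SKset 2 := by
  constructor
  · show 1 - ((2:ℕ):ℝ) < s.re
    push_cast
    linarith
  · simp only [Set.mem_singleton_iff]
    intro h
    rw [h] at hs
    simp at hs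

lemma Ghat_eq_tsum (hz : ∀ n : ℕ, z + n ≠ 0) (hN : 2*‖z‖ + 2 ≤ N) {s : ℂ} (hs : 1 < s.re) :
    Ghat z N s = ∑' ν : ℕ, (z + (ν:ℂ))^(-s) := by
  rw [Ghat_eqOn hz hN le_rfl (mem_SKset_two_of_re hs), GK_eq_tsum hz hN one_le_two hs]

lemma zero_mem_SKset_two : (0:ℂ) ∈ SKset 2 := by
  constructor
  · show 1 - ((2:ℕ):ℝ) < (0:ℂ).re
    push_cast
    norm_num
  · simp

lemma Ghat_eventuallyEq_GK2 (hz : ∀ n : ℕ, z + n ≠ 0) (hN : 2*‖z‖ + 2 ≤ N) :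
    Ghat z N =ᶠ[𝓝 0] GK z N 2 := by
  filter_upwards [(isOpen_SKset 2).mem_nhds zero_mem_SKset_two] with x hx
  exact Ghat_eqOn hz hN le_rfl hx

/-! ### The key uniqueness lemma -/

lemma key_uniqueness (hz : ∀ n : ℕ, z + n ≠ 0) (hN : 2*‖z‖ + 2 ≤ N) {U : Set ℂ} {g : ℂ → ℂ}
    (hUopen : IsOpen U) (hUconn : IsConnected U) (hUhalf : {s : ℂ | 1 < s.re} ⊆ U)
    (hU0 : (0:ℂ) ∈ U) (hg : DifferentiableOn ℂ g U)
    (hgs : ∀ s : ℂ, 1 < s.re → g s = ∑' ν : ℕ, (z + (ν:ℂ))^(-s)) :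
    g 0 = GK z N 2 0 ∧ deriv g 0 = deriv (GK z N 2) 0 := by
  set W := U \ {1} with hW
  have hWopen : IsOpen W := hUopen.sdiff isClosed_singleton
  have hWpre : IsPreconnected W :=
    isPreconnected_open_diff_singleton hUopen hUconn.isPreconnected 1
  have hgW : AnalyticOnNhd ℂ g W := (hg.mono Set.diff_subset).analyticOnNhd hWopen
  have hGhatW : AnalyticOnNhd ℂ (Ghat z N) W :=
    ((Ghat_diffOn hz hN).mono (fun x hx => hx.2)).analyticOnNhd hWopen
  have h2half : (2:ℂ) ∈ {s : ℂ | 1 < s.re} := by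
    simp only [Set.mem_setOf_eq, Complex.re_ofNat]
    norm_num
  have h2W : (2:ℂ) ∈ W := ⟨hUhalf h2half, by simp⟩
  have hev : g =ᶠ[𝓝 2] Ghat z N := by
    filter_upwards [(isOpen_halfplane 1).mem_nhds h2half] with x hx
    rw [hgs x hx, Ghat_eq_tsum hz hN hx]
  have heqon := hgW.eqOn_of_preconnected_of_eventuallyEq hGhatW hWpre h2W hev
  have h0W : (0:ℂ) ∈ W := ⟨hU0, by simp⟩
  have hev0 : g =ᶠ[𝓝 0] GK z N 2 := by
    have h1 : g =ᶠ[𝓝 0] Ghat z N := by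
      filter_upwards [hWopen.mem_nhds h0W] with x hx using heqon hx
    exact h1.trans (Ghat_eventuallyEq_GK2 hz hN)
  exact ⟨hev0.eq_of_nhds, hev0.deriv_eq⟩

end Glue


/-! ### Value of `GK 2` at `0` -/

lemma poch_one (s : ℂ) : poch 1 s = s := by simp [poch]

lemma EE_one_zero : EE 1 0 = -1 := by
  rw [EE]
  norm_num [poch_one, poch_zero, Complex.Gammaℝ_one]

section Values

variable {z : ℂ} {N : ℕ}

lemma term_two_zero (n : ℕ) : term z 2 n 0 = 0 := by
  rw [term, Finset.sum_range_succ, Finset.sum_range_one, cc_zero, cc_one]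
  norm_num

lemma GK2_zero (hz : ∀ n : ℕ, z + n ≠ 0) (hN : 2*‖z‖ + 2 ≤ N) :
    GK z N 2 0 = 1/2 - z := by
  have hN1 : 1 ≤ N := N_one_le hN
  rw [GK]
  have hA : ∑ n ∈ Finset.range N, (z+(n:ℂ))^(-(0:ℂ)) = (N:ℂ) := by
    rw [neg_zero]
    simp [Complex.cpow_zero]
  have hB0 : ∑ n ∈ Finset.Ico 1 N, (n:ℂ)^(-(0:ℂ)) = (N:ℂ) - 1 := by
    rw [neg_zero]
    simp only [Complex.cpow_zero]
    rw [Finset.sum_const, Nat.card_Ico]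
    simp [Nat.cast_sub hN1]
  have hmid : ∑ j ∈ Finset.Ico 1 2, ((z:ℂ)^j * EE j 0
      - cc j 0 * z^j * ∑ n ∈ Finset.Ico 1 N, (n:ℂ)^(-(0:ℂ)-(j:ℂ))) = -z := by
    rw [Finset.sum_Ico_eq_sum_range]
    norm_num [EE_one_zero, cc_one]
  have hFF : FF z N 2 0 = 0 := by
    rw [FF]
    have : ∀ m : ℕ, term z 2 (m+N) 0 = 0 := fun m => term_two_zero _
    rw [tsum_congr this]
    exact tsum_zero
  rw [hA, hB0, hmid, hFF, riemannZeta_zero]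
  ring

end Values


/-! ### Derivative of `GK 2` at `0` -/

lemma hasDerivAt_const_cpow_neg_zero {c : ℂ} (hc : c ≠ 0) :
    HasDerivAt (fun s : ℂ => c ^ (-s)) (-(Complex.log c)) 0 := by
  have h := (hasDerivAt_neg (0:ℂ)).const_cpow (Or.inl hc)
  convert h using 1
  rw [neg_zero, Complex.cpow_zero]
  ring

lemma hasDerivAt_const_cpow_neg_sub_zero {c : ℂ} (hc : c ≠ 0) (t : ℂ) :
    HasDerivAt (fun s : ℂ => c ^ (-s - t)) (-(Complex.log c) * c ^ (-t)) 0 := by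
  have h := ((hasDerivAt_neg (0:ℂ)).sub_const t).const_cpow (Or.inl hc)
  convert h using 1
  rw [neg_zero, zero_sub]
  ring

section Deriv

variable {z : ℂ} {N : ℕ}

lemma hasDerivAt_term_two (hz : ∀ n : ℕ, z + n ≠ 0) {n : ℕ} (hn : 0 < n) :
    HasDerivAt (fun s => term z 2 n s)
      (-(Complex.log (z+(n:ℂ))) + Complex.log ((n:ℂ)) + z * ((n:ℂ))⁻¹) 0 := by
  have hnne : (n:ℂ) ≠ 0 := Nat.cast_ne_zero.mpr hn.ne'
  have hfun : (fun s => term z 2 n s) = fun s =>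
      (z+(n:ℂ))^(-s) - ((n:ℂ)^(-s-((0:ℕ):ℂ)) + -s * (z * (n:ℂ)^(-s-((1:ℕ):ℂ)))) := by
    funext s
    rw [term, Finset.sum_range_succ, Finset.sum_range_one, cc_zero, cc_one]
    ring
  rw [hfun]
  have h1 := hasDerivAt_const_cpow_neg_zero (hz n)
  have h2 := hasDerivAt_const_cpow_neg_sub_zero hnne ((0:ℕ):ℂ)
  have h3w := (hasDerivAt_const_cpow_neg_sub_zero hnne ((1:ℕ):ℂ)).const_mul z
  have h3u : HasDerivAt (fun s : ℂ => -s) (-1 : ℂ) 0 := hasDerivAt_neg 0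
  have h3 := h3u.mul h3w
  have htot := h1.sub (h2.add h3)
  refine htot.congr_deriv ?_
  simp only [Nat.cast_zero, Nat.cast_one, neg_zero, zero_sub, Complex.cpow_zero,
    Complex.cpow_neg_one, zero_mul, neg_mul, one_mul, mul_one]
  ring

lemma FF2_hasSum_deriv (hz : ∀ n : ℕ, z + n ≠ 0) (hN : 2*‖z‖ + 2 ≤ N) :
    HasSum (fun m : ℕ => -(Complex.log (z+((m+N:ℕ):ℂ))) + Complex.log (((m+N:ℕ)):ℂ)
      + z * (((m+N:ℕ)):ℂ)⁻¹) (deriv (FF z N 2) 0) := by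
  have hpos : ∀ m : ℕ, 0 < m + N := by
    intro m
    have h1 := N_one_le hN
    omega
  have h := FF_hasSum_deriv hz hN 2 (s₀ := 0) (by push_cast; norm_num)
  have heq : (fun m : ℕ => deriv (fun s => term z 2 (m+N) s) 0)
      = fun m : ℕ => -(Complex.log (z+((m+N:ℕ):ℂ))) + Complex.log (((m+N:ℕ)):ℂ)
        + z * (((m+N:ℕ)):ℂ)⁻¹ :=
    funext fun m => (hasDerivAt_term_two hz (hpos m)).deriv
  rwa [heq] at h

lemma hasDerivAt_EE_one : HasDerivAt (EE 1) (-((Real.eulerMascheroniConstant : ℝ) : ℂ)) 0 := by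
  set γc : ℂ := ((Real.eulerMascheroniConstant : ℝ) : ℂ)
  set E : ℂ → ℂ := fun s => s * HH (s+1) + (Complex.Gammaℝ (s+1))⁻¹ with hE
  have hEE : EE 1 = fun s => -E s := by
    funext s
    rw [EE, hE]
    norm_num [poch_one, poch_zero]
    try ring
  have hmap : Filter.Tendsto (fun s : ℂ => s + 1) (𝓝[≠] 0) (𝓝[≠] 1) := by
    rw [tendsto_nhdsWithin_iff]
    constructor
    · have hcont : Continuous (fun s : ℂ => s + 1) := continuous_id.add continuous_const
      have h0 : Filter.Tendsto (fun s : ℂ => s + 1) (𝓝 0) (𝓝 1) := by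
        have := hcont.tendsto (0:ℂ)
        simpa using this
      exact h0.mono_left nhdsWithin_le_nhds
    · filter_upwards [self_mem_nhdsWithin] with x hx
      simp only [Set.mem_compl_iff, Set.mem_singleton_iff] at hx ⊢
      intro h
      apply hx
      have : x = 0 := by linear_combination h
      exact this
  have hζ := tendsto_riemannZeta_sub_one_div.comp hmap
  have hslope : Filter.Tendsto (slope E 0) (𝓝[≠] 0) (𝓝 γc) := by
    apply hζ.congr'
    filter_upwards [self_mem_nhdsWithin] with x hx
    simp only [Set.mem_compl_iff, Set.mem_singleton_iff] at hx
    have hE0 : E 0 = 1 := by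
      rw [hE]
      simp [Complex.Gammaℝ_one]
    have hEx : E x = x * riemannZeta (x+1) := by
      have hgone : x * ((x)⁻¹ * (Complex.Gammaℝ (x+1))⁻¹) = (Complex.Gammaℝ (x+1))⁻¹ := by
        rw [← mul_assoc, mul_inv_cancel₀ hx, one_mul]
      simp only [hE, HH]
      rw [show x + 1 - 1 = x by ring, mul_sub, hgone]
      ring
    rw [slope_def_field, hE0, hEx, Function.comp_apply]
    rw [show x + 1 - 1 = x by ring]
    field_simp
    ring
  have hEderiv : HasDerivAt E γc 0 := hasDerivAt_iff_tendsto_slope.mpr hslope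
  rw [hEE]
  exact hEderiv.neg

lemma GK2_deriv_eq (hz : ∀ n : ℕ, z + n ≠ 0) (hN : 2*‖z‖ + 2 ≤ N) :
    deriv (GK z N 2) 0 =
      (-∑ n ∈ Finset.range N, Complex.log (z+(n:ℂ)))
      + (deriv riemannZeta 0 + ∑ n ∈ Finset.Ico 1 N, Complex.log (n:ℂ))
      + (-(z * ((Real.eulerMascheroniConstant : ℝ) : ℂ))
          + z * ∑ n ∈ Finset.Ico 1 N, ((n:ℂ))⁻¹)
      + deriv (FF z N 2) 0 := by
  set γc : ℂ := ((Real.eulerMascheroniConstant : ℝ) : ℂ)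
  have hIcoNe : ∀ n ∈ Finset.Ico 1 N, (n:ℂ) ≠ 0 := by
    intro n hn
    exact Nat.cast_ne_zero.mpr (by have := (Finset.mem_Ico.mp hn).1; omega)
  have hA : HasDerivAt (fun s : ℂ => ∑ n ∈ Finset.range N, (z+(n:ℂ))^(-s))
      (-∑ n ∈ Finset.range N, Complex.log (z+(n:ℂ))) 0 := by
    rw [← Finset.sum_neg_distrib]
    exact HasDerivAt.fun_sum fun n _ => hasDerivAt_const_cpow_neg_zero (hz n)
  have hZB : HasDerivAt (fun s : ℂ => riemannZeta s - ∑ n ∈ Finset.Ico 1 N, (n:ℂ)^(-s))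
      (deriv riemannZeta 0 + ∑ n ∈ Finset.Ico 1 N, Complex.log (n:ℂ)) 0 := by
    have hZ : HasDerivAt riemannZeta (deriv riemannZeta 0) 0 :=
      (differentiableAt_riemannZeta (by norm_num)).hasDerivAt
    have hBsum : HasDerivAt (fun s : ℂ => ∑ n ∈ Finset.Ico 1 N, (n:ℂ)^(-s))
        (∑ n ∈ Finset.Ico 1 N, -(Complex.log (n:ℂ))) 0 :=
      HasDerivAt.fun_sum fun n hn => hasDerivAt_const_cpow_neg_zero (hIcoNe n hn)
    have := hZ.sub hBsum
    refine this.congr_deriv ?_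
    rw [Finset.sum_neg_distrib]
    ring
  have hmidfun : (fun s : ℂ => ∑ j ∈ Finset.Ico 1 2, (z^j * EE j s
        - cc j s * z^j * ∑ n ∈ Finset.Ico 1 N, (n:ℂ)^(-s-(j:ℂ))))
      = fun s : ℂ => z^1 * EE 1 s
        - cc 1 s * z^1 * ∑ n ∈ Finset.Ico 1 N, (n:ℂ)^(-s-((1:ℕ):ℂ)) := by
    funext s
    rw [Finset.sum_Ico_eq_sum_range]
    norm_num
  have hmid : HasDerivAt (fun s : ℂ => ∑ j ∈ Finset.Ico 1 2, (z^j * EE j s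
        - cc j s * z^j * ∑ n ∈ Finset.Ico 1 N, (n:ℂ)^(-s-(j:ℂ))))
      (-(z * γc) + z * ∑ n ∈ Finset.Ico 1 N, ((n:ℂ))⁻¹) 0 := by
    rw [hmidfun]
    have h1 : HasDerivAt (fun s : ℂ => z^1 * EE 1 s) (z^1 * -γc) 0 :=
      (hasDerivAt_EE_one).const_mul _
    have hcc : (fun s : ℂ => cc 1 s * z^1) = fun s : ℂ => -s * z^1 :=
      funext fun s => by rw [cc_one]
    have hu : HasDerivAt (fun s : ℂ => cc 1 s * z^1) (-1 * z^1) 0 := by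
      rw [hcc]
      exact (hasDerivAt_neg (0:ℂ)).mul_const _
    have hv : HasDerivAt (fun s : ℂ => ∑ n ∈ Finset.Ico 1 N, (n:ℂ)^(-s-((1:ℕ):ℂ)))
        (∑ n ∈ Finset.Ico 1 N, -(Complex.log (n:ℂ)) * (n:ℂ)^(-((1:ℕ):ℂ))) 0 :=
      HasDerivAt.fun_sum fun n hn => hasDerivAt_const_cpow_neg_sub_zero (hIcoNe n hn) _
    have hprod := hu.mul hv
    have htot := h1.sub hprod
    refine htot.congr_deriv ?_
    have hv0 : ∀ n ∈ Finset.Ico 1 N, ((n:ℂ))^(-(0:ℂ)-((1:ℕ):ℂ)) = ((n:ℂ))⁻¹ := fun n _ => by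
      rw [show (-(0:ℂ)-((1:ℕ):ℂ)) = -1 by norm_num, Complex.cpow_neg_one]
    rw [Finset.sum_congr rfl hv0]
    simp only [cc_one, neg_zero, zero_mul, pow_one, add_zero, mul_zero]
    ring
  have hFFd : HasDerivAt (FF z N 2) (deriv (FF z N 2) 0) 0 := by
    apply DifferentiableAt.hasDerivAt
    apply (FF_diffOn hz hN 2).differentiableAt
    apply (isOpen_halfplane _).mem_nhds
    show 1 - ((2:ℕ):ℝ) < (0:ℂ).re
    push_cast
    norm_num
  have hGK := ((hA.add hZB).add hmid).add hFFd
  exact hGK.deriv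

end Deriv


/-! ### The exponential of the derivative: Gamma limit -/

section Limit

variable {z : ℂ} {N : ℕ}

noncomputable def SS (z : ℂ) (L : ℕ) : ℂ :=
  Complex.exp (z * ((Real.eulerMascheroniConstant : ℝ) : ℂ) - z * ((harmonic L : ℚ) : ℂ))
    * ((∏ n ∈ Finset.range (L+1), (z+(n:ℂ))) / ((L.factorial : ℕ) : ℂ))

lemma prod_range_ne_zero (hz : ∀ n : ℕ, z + n ≠ 0) (L : ℕ) :
    (∏ n ∈ Finset.range (L+1), (z+(n:ℂ))) ≠ 0 :=
  Finset.prod_ne_zero_iff.mpr fun n _ => hz n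

lemma SS_mul_GammaSeq (hz : ∀ n : ℕ, z + n ≠ 0) {L : ℕ} (hL : 1 ≤ L) :
    SS z L * Complex.GammaSeq z L
      = Complex.exp (z * (((Real.eulerMascheroniConstant : ℝ) : ℂ) - ((harmonic L : ℚ) : ℂ)
          + Complex.log (L:ℂ))) := by
  have hLne : ((L:ℕ):ℂ) ≠ 0 := Nat.cast_ne_zero.mpr (by omega)
  have hfne : ((L.factorial : ℕ) : ℂ) ≠ 0 := Nat.cast_ne_zero.mpr L.factorial_ne_zero
  have hpne := prod_range_ne_zero hz L
  rw [SS, Complex.GammaSeq, Complex.cpow_def_of_ne_zero hLne]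
  rw [show z * (((Real.eulerMascheroniConstant : ℝ) : ℂ) - ((harmonic L : ℚ) : ℂ)
      + Complex.log (L:ℂ))
    = (z * ((Real.eulerMascheroniConstant : ℝ) : ℂ) - z * ((harmonic L : ℚ) : ℂ))
      + Complex.log (L:ℂ) * z by ring, Complex.exp_add]
  field_simp

lemma GammaSeq_ne_zero (hz : ∀ n : ℕ, z + n ≠ 0) {L : ℕ} (hL : 1 ≤ L) :
    Complex.GammaSeq z L ≠ 0 := by
  have hLne : ((L:ℕ):ℂ) ≠ 0 := Nat.cast_ne_zero.mpr (by omega)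
  have hfne : ((L.factorial : ℕ) : ℂ) ≠ 0 := Nat.cast_ne_zero.mpr L.factorial_ne_zero
  have hpne := prod_range_ne_zero hz L
  rw [Complex.GammaSeq, Complex.cpow_def_of_ne_zero hLne]
  apply div_ne_zero (mul_ne_zero (Complex.exp_ne_zero _) hfne)
  exact Finset.prod_ne_zero_iff.mpr fun n _ => hz n

lemma tendsto_SS_mul_GammaSeq (hz : ∀ n : ℕ, z + n ≠ 0) :
    Filter.Tendsto (fun L => SS z L * Complex.GammaSeq z L) Filter.atTop (𝓝 1) := by
  have hreal : Filter.Tendsto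
      (fun L : ℕ => Real.eulerMascheroniConstant - Real.eulerMascheroniSeq' L)
      Filter.atTop (𝓝 0) := by
    have h := tendsto_const_nhds (x := Real.eulerMascheroniConstant)
      (f := Filter.atTop (α := ℕ)) |>.sub Real.tendsto_eulerMascheroniSeq'
    rwa [sub_self] at h
  have hcplx : Filter.Tendsto (fun L : ℕ => Complex.exp (z *
      ((Real.eulerMascheroniConstant - Real.eulerMascheroniSeq' L : ℝ) : ℂ)))
      Filter.atTop (𝓝 1) := by
    have h1 : Filter.Tendsto (fun L : ℕ =>
        ((Real.eulerMascheroniConstant - Real.eulerMascheroniSeq' L : ℝ) : ℂ))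
        Filter.atTop (𝓝 0) := by
      have h := (Complex.continuous_ofReal.tendsto 0).comp hreal
      simpa [Function.comp_def] using h
    have h1' : Filter.Tendsto (fun L : ℕ => z *
        ((Real.eulerMascheroniConstant - Real.eulerMascheroniSeq' L : ℝ) : ℂ))
        Filter.atTop (𝓝 0) := by
      have := (tendsto_const_nhds (x := z)).mul h1
      rwa [mul_zero] at this
    have h2 := (Complex.continuous_exp.tendsto 0).comp h1'
    simpa [Function.comp_def, Complex.exp_zero] using h2
  apply hcplx.congr'
  filter_upwards [Filter.eventually_ge_atTop 1] with L hL
  rw [SS_mul_GammaSeq hz hL]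
  congr 1
  have hL0 : L ≠ 0 := by omega
  rw [Real.eulerMascheroniSeq', if_neg hL0]
  have hlog : Complex.log ((L:ℕ):ℂ) = ((Real.log (L:ℝ) : ℝ) : ℂ) := by
    rw [show ((L:ℕ):ℂ) = (((L:ℕ):ℝ):ℂ) from by push_cast; rfl]
    rw [← Complex.ofReal_log (Nat.cast_nonneg L)]
  rw [hlog]
  push_cast
  ring

lemma tendsto_SS (hz : ∀ n : ℕ, z + n ≠ 0) (hzeta : ∀ m : ℕ, z ≠ -(m:ℂ)) :
    Filter.Tendsto (SS z) Filter.atTop (𝓝 ((Complex.Gamma z)⁻¹)) := by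
  have hGne : Complex.Gamma z ≠ 0 := Complex.Gamma_ne_zero hzeta
  have hinv : Filter.Tendsto (fun L => (Complex.GammaSeq z L)⁻¹) Filter.atTop
      (𝓝 ((Complex.Gamma z)⁻¹)) := (Complex.GammaSeq_tendsto_Gamma z).inv₀ hGne
  have hmul := (tendsto_SS_mul_GammaSeq hz).mul hinv
  rw [one_mul] at hmul
  apply hmul.congr'
  filter_upwards [Filter.eventually_ge_atTop 1] with L hL
  rw [mul_assoc, mul_inv_cancel₀ (GammaSeq_ne_zero hz hL), mul_one]

end Limit


section Grand

variable {z : ℂ} {N : ℕ}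

lemma exp_deriv_GK2 (hz : ∀ n : ℕ, z + n ≠ 0) (hzneg : ∀ m : ℕ, z ≠ -(m:ℂ))
    (hN : 2*‖z‖ + 2 ≤ N) :
    Complex.exp (-(deriv (GK z N 2) 0))
      = Complex.exp (-(deriv riemannZeta 0)) / Complex.Gamma z := by
  have hN1 : 1 ≤ N := N_one_le hN
  have hderiv := GK2_deriv_eq hz hN
  have hT : HasSum (fun m : ℕ => -(Complex.log (z+((m+N:ℕ):ℂ))) + Complex.log (((m+N:ℕ)):ℂ)
      + z * (((m+N:ℕ)):ℂ)⁻¹) (deriv (FF z N 2) 0) := FF2_hasSum_deriv hz hN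
  set γc : ℂ := ((Real.eulerMascheroniConstant : ℝ) : ℂ) with hγc
  set LA : ℂ := ∑ n ∈ Finset.range N, Complex.log (z+(n:ℂ)) with hLA
  set LB : ℂ := ∑ n ∈ Finset.Ico 1 N, Complex.log (n:ℂ) with hLB
  set BI : ℂ := ∑ n ∈ Finset.Ico 1 N, ((n:ℂ))⁻¹ with hBI
  set T : ℂ := deriv (FF z N 2) 0 with hTdef
  set dm : ℕ → ℂ := fun m : ℕ => -(Complex.log (z+((m+N:ℕ):ℂ))) + Complex.log (((m+N:ℕ)):ℂ)
      + z * (((m+N:ℕ)):ℂ)⁻¹ with hdm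
  rw [hderiv]
  rw [show -((-LA) + (deriv riemannZeta 0 + LB) + (-(z*γc) + z*BI) + T)
      = -(deriv riemannZeta 0) + (LA - LB + z*γc - z*BI - T) by ring]
  rw [Complex.exp_add, div_eq_mul_inv]
  congr 1
  have hQlim : Filter.Tendsto
      (fun M : ℕ => Complex.exp (LA - LB + z*γc - z*BI - ∑ m ∈ Finset.range M, dm m))
      Filter.atTop (𝓝 (Complex.exp (LA - LB + z*γc - z*BI - T))) := by
    apply (Complex.continuous_exp.tendsto _).comp
    exact tendsto_const_nhds.sub hT.tendsto_sum_nat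
  have hQeq : ∀ M : ℕ,
      Complex.exp (LA - LB + z*γc - z*BI - ∑ m ∈ Finset.range M, dm m) = SS z (N-1+M) := by
    intro M
    set L : ℕ := N - 1 + M with hL
    have hNM : N + M = L + 1 := by omega
    have hP : ∑ n ∈ Finset.range (N+M), Complex.log (z+(n:ℂ))
        = LA + ∑ m ∈ Finset.range M, Complex.log (z+((m+N:ℕ):ℂ)) := by
      rw [Finset.sum_range_add, hLA]
      congr 1
      apply Finset.sum_congr rfl
      intro m _
      rw [Nat.add_comm N m]
    have hQe : ∑ n ∈ Finset.Ico 1 (N+M), Complex.log ((n:ℕ):ℂ)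
        = LB + ∑ m ∈ Finset.range M, Complex.log (((m+N:ℕ)):ℂ) := by
      rw [← Finset.sum_Ico_consecutive (fun n : ℕ => Complex.log ((n:ℕ):ℂ)) hN1
        (by omega : N ≤ N + M), hLB]
      congr 1
      rw [Finset.sum_Ico_eq_sum_range]
      simp only [Nat.add_sub_cancel_left]
      apply Finset.sum_congr rfl
      intro m _
      rw [Nat.add_comm N m]
    have hHe : ∑ n ∈ Finset.Ico 1 (N+M), (((n:ℕ)):ℂ)⁻¹
        = BI + ∑ m ∈ Finset.range M, (((m+N:ℕ)):ℂ)⁻¹ := by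
      rw [← Finset.sum_Ico_consecutive (fun n : ℕ => (((n:ℕ)):ℂ)⁻¹) hN1
        (by omega : N ≤ N + M), hBI]
      congr 1
      rw [Finset.sum_Ico_eq_sum_range]
      simp only [Nat.add_sub_cancel_left]
      apply Finset.sum_congr rfl
      intro m _
      rw [Nat.add_comm N m]
    have hHval : ∑ n ∈ Finset.Ico 1 (N+M), (((n:ℕ)):ℂ)⁻¹ = ((harmonic L : ℚ) : ℂ) := by
      rw [hNM]
      simp only [harmonic]
      push_cast
      rw [Finset.sum_Ico_eq_sum_range]
      simp only [Nat.add_sub_cancel]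
      apply Finset.sum_congr rfl
      intro i _
      push_cast
      rw [add_comm]
    have hdmsplit : ∑ m ∈ Finset.range M, dm m
        = -(∑ m ∈ Finset.range M, Complex.log (z+((m+N:ℕ):ℂ)))
          + ∑ m ∈ Finset.range M, Complex.log (((m+N:ℕ)):ℂ)
          + z * ∑ m ∈ Finset.range M, (((m+N:ℕ)):ℂ)⁻¹ := by
      rw [hdm, Finset.mul_sum, ← Finset.sum_neg_distrib, ← Finset.sum_add_distrib,
        ← Finset.sum_add_distrib]
    have harg : LA - LB + z*γc - z*BI - ∑ m ∈ Finset.range M, dm m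
        = (z*γc - z*((harmonic L : ℚ) : ℂ))
          + (∑ n ∈ Finset.range (N+M), Complex.log (z+(n:ℂ))
             - ∑ n ∈ Finset.Ico 1 (N+M), Complex.log ((n:ℕ):ℂ)) := by
      rw [hdmsplit, hP, hQe, ← hHval, hHe]
      ring
    rw [harg, Complex.exp_add, SS]
    congr 1
    have hPexp : Complex.exp (∑ n ∈ Finset.range (N+M), Complex.log (z+(n:ℂ)))
        = ∏ n ∈ Finset.range (N+M), (z+(n:ℂ)) := by
      rw [Complex.exp_sum]
      exact Finset.prod_congr rfl fun n _ => Complex.exp_log (hz n)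
    have hQexp : Complex.exp (∑ n ∈ Finset.Ico 1 (N+M), Complex.log ((n:ℕ):ℂ))
        = ∏ n ∈ Finset.Ico 1 (N+M), ((n:ℕ):ℂ) := by
      rw [Complex.exp_sum]
      refine Finset.prod_congr rfl fun n hn => Complex.exp_log ?_
      exact Nat.cast_ne_zero.mpr (by have := (Finset.mem_Ico.mp hn).1; omega)
    have hfact : ∏ n ∈ Finset.Ico 1 (N+M), ((n:ℕ):ℂ) = ((L.factorial : ℕ) : ℂ) := by
      rw [hNM, ← Nat.cast_prod]
      exact_mod_cast congrArg (Nat.cast (R := ℂ)) (Finset.prod_Ico_id_eq_factorial L)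
    rw [Complex.exp_sub, hPexp, hQexp, hfact, hNM]
  have hSlim : Filter.Tendsto (fun M : ℕ => SS z (N-1+M)) Filter.atTop
      (𝓝 ((Complex.Gamma z)⁻¹)) := by
    have h1 := (tendsto_SS hz hzneg).comp (Filter.tendsto_add_atTop_nat (N-1))
    apply h1.congr
    intro M
    simp only [Function.comp_apply]
    rw [Nat.add_comm]
  exact tendsto_nhds_unique (hQlim.congr hQeq) hSlim

end Grand


/-! ### The special value `z = 1/2` and the constant -/

lemma arg_two_ne_pi : Complex.arg (2:ℂ) ≠ Real.pi := by
  rw [show (2:ℂ) = ((2:ℝ):ℂ) by norm_num, Complex.arg_ofReal_of_nonneg (by norm_num)]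
  exact Ne.symm Real.pi_ne_zero

lemma two_cpow_ne_zero (s : ℂ) : (2:ℂ)^s ≠ 0 := by
  rw [Complex.cpow_def_of_ne_zero (by norm_num)]
  exact Complex.exp_ne_zero _

lemma half_term (ν : ℕ) (s : ℂ) :
    ((1/2 : ℂ) + (ν:ℂ))^(-s) = (2:ℂ)^s * ((2*ν+1:ℕ):ℂ)^(-s) := by
  have hx : ((2*ν+1:ℕ):ℂ) ≠ 0 := Nat.cast_ne_zero.mpr (by omega)
  have heq : (1/2 : ℂ) + (ν:ℂ) = (((1/2:ℝ)):ℂ) * ((2*ν+1:ℕ):ℂ) := by push_cast; ring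
  rw [heq, ofReal_mul_cpow (by norm_num) hx]
  congr 1
  have h2 : (((1/2:ℝ)):ℂ) = ((2:ℂ))⁻¹ := by norm_num
  rw [h2, Complex.inv_cpow _ _ arg_two_ne_pi, Complex.cpow_neg, inv_inv]

lemma even_term (k : ℕ) (s : ℂ) : ((2*k:ℕ):ℂ)^(-s) = (2:ℂ)^(-s) * ((k:ℕ):ℂ)^(-s) := by
  have h := mul_cpow_ofReal_nonneg (by norm_num : (0:ℝ) ≤ (2:ℝ))
    (Nat.cast_nonneg (α := ℝ) k) (-s)
  have hcast : ((2*k:ℕ):ℂ) = (((2:ℝ)):ℂ) * (((k:ℕ):ℝ):ℂ) := by push_cast; ring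
  rw [hcast, h]
  norm_num

lemma half_series {s : ℂ} (hs : 1 < s.re) :
    ((2:ℂ)^s - 1) * riemannZeta s = ∑' ν : ℕ, ((1/2 : ℂ) + (ν:ℂ))^(-s) := by
  have hre : (-s).re < -1 := by simp; linarith
  have hsum : Summable (fun n : ℕ => ((n:ℕ):ℂ)^(-s)) := summable_cpow_nat hre
  have heven : Summable (fun k : ℕ => ((2*k:ℕ):ℂ)^(-s)) :=
    hsum.comp_injective (fun a b h => by omega)
  have hodd : Summable (fun k : ℕ => ((2*k+1:ℕ):ℂ)^(-s)) :=
    hsum.comp_injective (fun a b h => by omega)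
  have hsplit := tsum_even_add_odd (f := fun n : ℕ => ((n:ℕ):ℂ)^(-s)) heven hodd
  have hzeta : ∑' n : ℕ, ((n:ℕ):ℂ)^(-s) = riemannZeta s := by
    have := tsum_cpow_eq_zeta hre
    rwa [neg_neg] at this
  have heven_val : ∑' k : ℕ, ((2*k:ℕ):ℂ)^(-s) = (2:ℂ)^(-s) * riemannZeta s := by
    rw [tsum_congr (fun k => even_term k s), tsum_mul_left, hzeta]
  have hodd_val : ∑' k : ℕ, ((2*k+1:ℕ):ℂ)^(-s)
      = (1 - (2:ℂ)^(-s)) * riemannZeta s := by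
    have h1 : ∑' k : ℕ, ((2*k:ℕ):ℂ)^(-s) + ∑' k : ℕ, ((2*k+1:ℕ):ℂ)^(-s) = riemannZeta s := by
      rw [← hzeta]
      simpa using hsplit
    rw [heven_val] at h1
    linear_combination h1
  calc ((2:ℂ)^s - 1) * riemannZeta s
      = (2:ℂ)^s * ((1 - (2:ℂ)^(-s)) * riemannZeta s) := by
        rw [Complex.cpow_neg]
        field_simp [two_cpow_ne_zero s]
        try ring
    _ = (2:ℂ)^s * ∑' k : ℕ, ((2*k+1:ℕ):ℂ)^(-s) := by rw [hodd_val]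
    _ = ∑' k : ℕ, (2:ℂ)^s * ((2*k+1:ℕ):ℂ)^(-s) := by rw [tsum_mul_left]
    _ = ∑' ν : ℕ, ((1/2 : ℂ) + (ν:ℂ))^(-s) := by
        apply tsum_congr
        intro ν
        rw [half_term]

lemma hzneg_half : ∀ n : ℕ, (1/2 : ℂ) ≠ -(n:ℂ) := by
  intro n h
  have := congrArg Complex.re h
  simp only [Complex.div_re, Complex.one_re, Complex.neg_re, Complex.natCast_re] at this
  norm_num at this
  linarith [Nat.cast_nonneg (α := ℝ) n]

lemma hz_of_hzneg {z : ℂ} (h : ∀ n : ℕ, z ≠ -(n:ℂ)) : ∀ n : ℕ, z + n ≠ 0 := by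
  intro n hn
  exact h n (by linear_combination hn)

lemma NN_ge (z : ℂ) : 2*‖z‖ + 2 ≤ ((⌈2*‖z‖⌉₊ + 2 : ℕ) : ℝ) := by
  push_cast
  linarith [Nat.le_ceil (2*‖z‖)]

lemma isConnected_compl_one : IsConnected ({(1:ℂ)}ᶜ : Set ℂ) := by
  apply isConnected_compl_singleton_of_one_lt_rank
  rw [Complex.rank_real_complex]
  norm_num

lemma halfplane_subset_compl_one : {s : ℂ | 1 < s.re} ⊆ ({(1:ℂ)}ᶜ : Set ℂ) := by
  intro s hs
  simp only [Set.mem_compl_iff, Set.mem_singleton_iff]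
  intro h
  rw [h] at hs
  simp at hs

lemma C_value : Complex.exp (-(deriv riemannZeta 0)) = ((Real.sqrt (2*Real.pi) : ℝ) : ℂ) := by
  set z : ℂ := 1/2 with hzdef
  have hzneg := hzneg_half
  have hz : ∀ n : ℕ, z + n ≠ 0 := hz_of_hzneg hzneg
  set N : ℕ := ⌈2*‖z‖⌉₊ + 2 with hNdef
  have hN : 2*‖z‖ + 2 ≤ (N:ℝ) := NN_ge z
  set g : ℂ → ℂ := fun s => ((2:ℂ)^s - 1) * riemannZeta s with hgdef
  have hgdiff : DifferentiableOn ℂ g ({(1:ℂ)}ᶜ : Set ℂ) := by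
    intro s hs
    have hs1 : s ≠ 1 := hs
    apply DifferentiableAt.differentiableWithinAt
    exact ((differentiable_id.const_cpow (Or.inl (by norm_num))).differentiableAt.sub_const 1).mul
      (differentiableAt_riemannZeta hs1)
  have hgs : ∀ s : ℂ, 1 < s.re → g s = ∑' ν : ℕ, (z + (ν:ℂ))^(-s) := by
    intro s hs
    rw [hgdef, hzdef]
    exact half_series hs
  obtain ⟨hval, hder⟩ := key_uniqueness hz hN isOpen_compl_singleton isConnected_compl_one
    halfplane_subset_compl_one (by simp) hgdiff hgs
  have hexp := exp_deriv_GK2 hz hzneg hN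
  rw [← hder] at hexp
  -- compute deriv g 0
  have hg0 : HasDerivAt g (Complex.log 2 * (-1/2)) 0 := by
    have h2 : HasDerivAt (fun s : ℂ => (2:ℂ)^s) (Complex.log 2) 0 := by
      have h := (hasDerivAt_id (0:ℂ)).const_cpow (c := (2:ℂ)) (Or.inl (by norm_num))
      refine h.congr_deriv ?_
      simp [Complex.cpow_zero]
    have hζ : HasDerivAt riemannZeta (deriv riemannZeta 0) 0 :=
      (differentiableAt_riemannZeta (by norm_num)).hasDerivAt
    have := (h2.sub_const 1).mul hζ
    refine this.congr_deriv ?_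
    rw [riemannZeta_zero]
    simp [Complex.cpow_zero]
    try ring
  rw [hg0.deriv] at hexp
  -- hexp : exp (-(log 2 * (-1/2))) = exp (-(deriv ζ 0)) / Gamma (1/2)
  have hGhalf : Complex.Gamma (1/2 : ℂ) = ((Real.sqrt Real.pi : ℝ) : ℂ) := by
    rw [Complex.Gamma_one_half_eq]
    rw [show ((1:ℂ)/2) = (((1/2 : ℝ)):ℂ) by norm_num]
    rw [← Complex.ofReal_cpow Real.pi_pos.le]
    rw [Real.sqrt_eq_rpow]
  have h2exp : Complex.exp (Complex.log 2 / 2) = ((Real.sqrt 2 : ℝ) : ℂ) := by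
    have hlog2 : Complex.log (2:ℂ) = ((Real.log 2 : ℝ) : ℂ) := by
      rw [show (2:ℂ) = ((2:ℝ):ℂ) by norm_num, ← Complex.ofReal_log (by norm_num)]
    rw [hlog2, show (((Real.log 2 : ℝ)):ℂ)/2 = ((Real.log 2 / 2 : ℝ):ℂ) by push_cast; ring,
      ← Complex.ofReal_exp]
    congr 1
    rw [← Real.log_sqrt (by norm_num : (0:ℝ) ≤ 2),
      Real.exp_log (Real.sqrt_pos.mpr (by norm_num))]
  rw [hzdef] at hexp
  rw [show -(Complex.log 2 * (-1/2)) = Complex.log 2 / 2 by ring, h2exp, hGhalf] at hexp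
  have hπne : ((Real.sqrt Real.pi : ℝ) : ℂ) ≠ 0 :=
    Complex.ofReal_ne_zero.mpr (Real.sqrt_pos.mpr Real.pi_pos).ne'
  rw [eq_div_iff hπne] at hexp
  rw [← hexp, ← Complex.ofReal_mul, ← Real.sqrt_mul (by norm_num : (0:ℝ) ≤ 2) Real.pi]

end LerchAux


/-- **Lerch's formula for complex parameter, exponentiated form.**
For `z ∈ ℂ` with `−z` not a nonnegative integer, the series `Z(s) = ∑_{ν ≥ 0} (z + ν)^{−s}`
(principal powers) converges absolutely for `Re s > 1`, admits an analytic continuation `g`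
to a connected open set containing the half-plane `{Re s > 1}` and `0`, and any such
continuation satisfies `g(0) = 1/2 − z` and `exp(−g′(0)) = √(2π)/Γ(z)`. -/
theorem lerch_formula_complex_parameter (z : ℂ)
    (hz : ∀ n : ℕ, z ≠ -(n : ℂ)) :
    (∀ s : ℂ, 1 < s.re →
      Summable (fun ν : ℕ => ‖(z + (ν : ℂ)) ^ (-s)‖)) ∧
    (∃ (U : Set ℂ) (g : ℂ → ℂ), IsOpen U ∧ IsConnected U ∧
      {s : ℂ | 1 < s.re} ⊆ U ∧ (0 : ℂ) ∈ U ∧ DifferentiableOn ℂ g U ∧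
      ∀ s : ℂ, 1 < s.re → g s = ∑' ν : ℕ, (z + (ν : ℂ)) ^ (-s)) ∧
    (∀ (U : Set ℂ) (g : ℂ → ℂ), IsOpen U → IsConnected U →
      {s : ℂ | 1 < s.re} ⊆ U → (0 : ℂ) ∈ U → DifferentiableOn ℂ g U →
      (∀ s : ℂ, 1 < s.re → g s = ∑' ν : ℕ, (z + (ν : ℂ)) ^ (-s)) →
      g 0 = 1 / 2 - z ∧
      Complex.exp (-(deriv g 0)) = (Real.sqrt (2 * Real.pi) : ℂ) / Complex.Gamma z) := by
  have hz' : ∀ n : ℕ, z + n ≠ 0 := LerchAux.hz_of_hzneg hz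
  set N : ℕ := ⌈2*‖z‖⌉₊ + 2 with hNdef
  have hN : 2*‖z‖ + 2 ≤ (N:ℝ) := LerchAux.NN_ge z
  refine ⟨fun s hs => LerchAux.summable_norm_main hz' hs, ?_, ?_⟩
  · exact ⟨({(1:ℂ)}ᶜ : Set ℂ), LerchAux.Ghat z N, isOpen_compl_singleton,
      LerchAux.isConnected_compl_one, LerchAux.halfplane_subset_compl_one, by simp,
      LerchAux.Ghat_diffOn hz' hN, fun s hs => LerchAux.Ghat_eq_tsum hz' hN hs⟩
  · intro U g hUopen hUconn hUhalf hU0 hg hgs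
    obtain ⟨hval, hder⟩ := LerchAux.key_uniqueness hz' hN hUopen hUconn hUhalf hU0 hg hgs
    constructor
    · rw [hval, LerchAux.GK2_zero hz' hN]
    · rw [hder, LerchAux.exp_deriv_GK2 hz' hz hN, LerchAux.C_value]
end

section
/- Let X be a set, let φ : ℝ → X → X be an action of the additive group ℝ on X (φ(0) = id and φ(t + t′) = φ(t) ∘ φ(t′) for all t, t′), and let σ : X → X satisfy σ ∘ φ(t) = φ(t) ∘ σ for all t ∈ ℝ and σ^N = id for some integer N ≥ 1. Suppose ε > 0 is such that every point x ∈ X with φ(t)(x) = x for some t ∈ (0, ε) is a fixed point of the whole flow (i.e. φ(t′)(x) = x for all t′ ∈ ℝ). Then for every real s with 0 < s and N·s < ε and every x ∈ X: φ(s)(σ(x)) = x holds if and only if σ(x) = x and φ(t)(x) = x for all t ∈ ℝ. In other words, the fixed points of φ(s) ∘ σ are exactly the fixed points of the flow that are also fixed by σ. -/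
/-!
If `φ s ∘ σ` fixes `x`, then, since `σ` commutes with the flow, its `N`-th iterate
`φ (N s) ∘ σ^N = φ (N s)` fixes `x` too. As `0 < N s < ε`, this short period forces `x`
to be a fixed point of the whole flow, and then `σ x = φ (-s) (φ s (σ x)) = φ (-s) x = x`.
-/

section Flow

open Function

variable {X : Type*} {φ : ℝ → X → X}

theorem flow_iterate (hφ0 : φ 0 = id) (hφadd : ∀ t t' : ℝ, φ (t + t') = φ t ∘ φ t')
    (s : ℝ) (n : ℕ) : (φ s)^[n] = φ (n * s) := by
  induction n with
  | zero => simp [hφ0]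
  | succ n ih => rw [iterate_succ, ih, ← hφadd, Nat.cast_succ, add_one_mul]

theorem flow_neg_apply_apply (hφ0 : φ 0 = id) (hφadd : ∀ t t' : ℝ, φ (t + t') = φ t ∘ φ t')
    (s : ℝ) (x : X) : φ (-s) (φ s x) = x := by
  rw [← comp_apply (f := φ (-s)), ← hφadd, neg_add_cancel, hφ0, id]

theorem isFixedPt_flow_natCast_mul_of_isFixedPt_comp (hφ0 : φ 0 = id)
    (hφadd : ∀ t t' : ℝ, φ (t + t') = φ t ∘ φ t') {σ : X → X} (hσφ : ∀ t : ℝ, σ ∘ φ t = φ t ∘ σ)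
    {N : ℕ} (hσN : σ^[N] = id) {s : ℝ} {x : X} (hx : IsFixedPt (φ s ∘ σ) x) :
    IsFixedPt (φ (N * s)) x := by
  have hcomm : Function.Commute (φ s) σ := fun y => (congrFun (hσφ s) y).symm
  have := hx.iterate N
  rwa [hcomm.comp_iterate, hσN, comp_id, flow_iterate hφ0 hφadd] at this

end Flow

theorem fixed_points_of_flow_automorphism_general {X : Type*}
    (φ : ℝ → X → X) (hφ0 : φ 0 = id)
    (hφadd : ∀ t t' : ℝ, φ (t + t') = φ t ∘ φ t')
    (σ : X → X) (hσφ : ∀ t : ℝ, σ ∘ φ t = φ t ∘ σ)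
    (N : ℕ) (hN : 1 ≤ N) (hσN : σ^[N] = id)
    (ε : ℝ)
    (hper : ∀ (x : X) (t : ℝ), 0 < t → t < ε → φ t x = x → ∀ t' : ℝ, φ t' x = x) :
    ∀ s : ℝ, 0 < s → (N : ℝ) * s < ε →
      ∀ x : X, φ s (σ x) = x ↔ (σ x = x ∧ ∀ t : ℝ, φ t x = x) := by
  intro s hs hNs x
  constructor
  · intro hx
    have hNpos : (0 : ℝ) < N := Nat.cast_pos.mpr hN
    have hflow : ∀ t : ℝ, φ t x = x :=
      hper x _ (by positivity) hNs
        (isFixedPt_flow_natCast_mul_of_isFixedPt_comp hφ0 hφadd hσφ hσN hx)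
    refine ⟨?_, hflow⟩
    calc σ x = φ (-s) (φ s (σ x)) := (flow_neg_apply_apply hφ0 hφadd s (σ x)).symm
      _ = x := by rw [hx, hflow]
  · rintro ⟨hσx, hflow⟩
    rw [hσx]
    exact hflow s

/-- Let `φ` be a flow on a set `X` and `σ` a finite-order automorphism of the flow.
If every point that is fixed by some `φ t` with `0 < t < ε` is fixed by the whole flow
(all periodic orbits have length `≥ ε`), then for `0 < s` with `N·s < ε`, the fixed
points of `φ s ∘ σ` are exactly the fixed points of the flow that are fixed by `σ`. -/
theorem fixed_points_of_flow_automorphism {X : Type*}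
    (φ : ℝ → X → X) (hφ0 : φ 0 = id)
    (hφadd : ∀ t t' : ℝ, φ (t + t') = φ t ∘ φ t')
    (σ : X → X) (hσφ : ∀ t : ℝ, σ ∘ φ t = φ t ∘ σ)
    (N : ℕ) (hN : 1 ≤ N) (hσN : σ^[N] = id)
    (ε : ℝ) (hε : 0 < ε)
    (hper : ∀ (x : X) (t : ℝ), 0 < t → t < ε → φ t x = x → ∀ t' : ℝ, φ t' x = x) :
    ∀ s : ℝ, 0 < s → (N : ℝ) * s < ε →
      ∀ x : X, φ s (σ x) = x ↔ (σ x = x ∧ ∀ t : ℝ, φ t x = x) :=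
  fixed_points_of_flow_automorphism_general φ hφ0 hφadd σ hσφ N hN hσN ε hper
end
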